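/- arXiv:2512.01385 — 8 statements merged into one kernel-verified Lean document; each statement's English description precedes it below -/
import Mathlib

section
/- Let p > 3 be a prime and let d be a nonzero rational number that is a p-adic unit. Then ∑_{k=0}^{p−1} (1 + ((27−4d)/6)k² + ((27+2d)/6)k) · C(3k,k)/d^k ≡ (−27/d)^{p−1} p((2p−1)(1 − 3p·q_p(3)) − 6p² q_p(3)²) (mod p⁴), where the congruence means the difference divided by p⁴ is a p-adic integer. -/
/-
The summand telescopes: `S(n) = n(2n-1) C(3n,n) d / (3dⁿ)` satisfies `S(n+1) - S(n) =` the
`n`-th term, by the recurrence `2(n+1)(2n+1) C(3n+3,n+1) = 3(3n+1)(3n+2) C(3n,n)`. Hence the sum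
equals `p(2p-1) N / d^(p-1)` with `N = C(3p-1,p-1)`, while `27^(p-1) = (1+pq)³` with
`q = q_p(3) ∈ ℤ`, and `(1+pq)³((2p-1)(1-3pq) - 6p²q²) ≡ 2p-1 (mod p³)`. So everything
reduces to Jacobsthal's congruence `C(ap+p-1, p-1) ≡ 1 (mod p³)`. For it, pair `j` with `p-j` in
`(p-1)! C(ap+p-1,p-1) = ∏ (ap+j)`: each pair is `j(p-j) + a(a+1)p²`, so modulo `p³` the product
is `(p-1)!` plus `a(a+1)p² ∑ⱼ ∏_{i≠j} i(p-i)`, and this correction vanishes because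
`∑_{j ≤ (p-1)/2} j⁻² ≡ 0 (mod p)`.
-/

open Finset Nat

/-- Fermat quotient `q_p(a) = (a^(p-1) - 1)/p` as a rational number. -/
def fermatQuotient (p a : ℕ) : ℚ := ((a : ℚ) ^ (p - 1) - 1) / (p : ℚ)

theorem Nat.choose_three_mul_succ_recurrence (n : ℕ) :
    2 * (n + 1) * (2 * n + 1) * (3 * (n + 1)).choose (n + 1) =
      3 * (3 * n + 1) * (3 * n + 2) * (3 * n).choose n := by
  have h₁ := add_one_mul_choose_eq (3 * n) n
  have h₂ := choose_mul_succ_eq (3 * n + 1) (n + 1)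
  have h₃ := choose_mul_succ_eq (3 * n + 2) (n + 1)
  rw [show 3 * n + 1 + 1 - (n + 1) = 2 * n + 1 by omega] at h₂
  rw [show 3 * n + 2 + 1 - (n + 1) = 2 * n + 2 by omega] at h₃
  have h₃' : 2 * (3 * (n + 1)).choose (n + 1) = 3 * (3 * n + 2).choose (n + 1) := by
    apply Nat.eq_of_mul_eq_mul_left (succ_pos n)
    rw [show 3 * (n + 1) = 3 * n + 2 + 1 by ring]
    linarith
  calc 2 * (n + 1) * (2 * n + 1) * (3 * (n + 1)).choose (n + 1)
      = (n + 1) * (2 * n + 1) * (2 * (3 * (n + 1)).choose (n + 1)) := by ring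
    _ = 3 * (n + 1) * ((3 * n + 2).choose (n + 1) * (2 * n + 1)) := by rw [h₃']; ring
    _ = 3 * (3 * n + 2) * ((3 * n + 1).choose (n + 1) * (n + 1)) := by rw [← h₂]; ring
    _ = 3 * (3 * n + 1) * (3 * n + 2) * (3 * n).choose n := by rw [← h₁]; ring

theorem sum_range_choose_three_mul_div_pow {K : Type*} [Field K] [CharZero K] {d : K}
    (hd : d ≠ 0) (n : ℕ) :
    ∑ k ∈ range n, (1 + ((27 - 4 * d) / 6) * (k : K) ^ 2 + ((27 + 2 * d) / 6) * (k : K)) *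
        (((3 * k).choose k : ℕ) : K) / d ^ k =
      n * (2 * n - 1) * (((3 * n).choose n : ℕ) : K) * d / (3 * d ^ n) := by
  induction n with
  | zero => simp
  | succ n ih =>
    have hrec : (2 * (n + 1) * (2 * n + 1) * (3 * (n + 1)).choose (n + 1) : K) =
        3 * (3 * n + 1) * (3 * n + 2) * (3 * n).choose n := by
      exact_mod_cast Nat.choose_three_mul_succ_recurrence n
    rw [sum_range_succ, ih]
    field_simp
    push_cast
    linear_combination (-3 * d * d ^ n) * hrec

theorem Finset.prod_range_two_mul_eq_prod_mul_reflect {M : Type*} [CommMonoid M] (f : ℕ → M)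
    (m : ℕ) : ∏ i ∈ range (2 * m), f i = ∏ i ∈ range m, f i * f (2 * m - 1 - i) := by
  rw [two_mul, prod_range_add, prod_mul_distrib, ← prod_range_reflect (fun i => f (m + i)) m]
  refine congrArg _ (prod_congr rfl fun i hi => congrArg f ?_)
  have := mem_range.1 hi
  omega

theorem Finset.prod_add_of_mul_self_eq_zero {ι R : Type*} [CommRing R] [DecidableEq ι]
    {c : R} (hc : c * c = 0) (s : Finset ι) (f : ι → R) :
    ∏ i ∈ s, (f i + c) = ∏ i ∈ s, f i + c * ∑ i ∈ s, ∏ j ∈ s.erase i, f j := by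
  induction s using Finset.induction_on with
  | empty => simp
  | @insert a s ha ih =>
    have herase :
        ∀ i ∈ s, ∏ j ∈ (insert a s).erase i, f j = f a * ∏ j ∈ s.erase i, f j := by
      intro i hi
      rw [erase_insert_of_ne (ne_of_mem_of_not_mem hi ha).symm,
        prod_insert fun h => ha (mem_of_mem_erase h)]
    rw [prod_insert ha, prod_insert ha, ih, sum_insert ha, erase_insert ha,
      sum_congr rfl herase, ← mul_sum]
    linear_combination (∑ i ∈ s, ∏ j ∈ s.erase i, f j) * hc

theorem ZMod.sum_range_inv_sq_eq_zero {p : ℕ} [Fact p.Prime] (hp : 3 < p) :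
    ∑ i ∈ range p, ((i : ZMod p) ^ 2)⁻¹ = 0 := by
  have hrange : ∑ i ∈ range p, ((i : ZMod p) ^ 2)⁻¹ = ∑ x : ZMod p, (x ^ 2)⁻¹ :=
    sum_nbij' (fun i => (i : ZMod p)) ZMod.val (fun _ _ => mem_univ _)
      (fun x _ => mem_range.2 (ZMod.val_lt x))
      (fun _ hi => ZMod.val_cast_of_lt (mem_range.1 hi)) (fun x _ => ZMod.natCast_zmod_val x)
      (fun _ _ => rfl)
  rw [hrange, Fintype.sum_equiv (Equiv.inv (ZMod p)) _ (· ^ 2) fun x => (inv_pow x 2).symm]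
  exact FiniteField.sum_pow_lt_card_sub_one _ 2 (by rw [ZMod.card]; omega)

theorem ZMod.sum_range_half_inv_sq_eq_zero {p : ℕ} [Fact p.Prime] (hp : 3 < p) {m : ℕ}
    (hm : p = 2 * m + 1) : ∑ i ∈ range m, (((i + 1 : ℕ) : ZMod p) ^ 2)⁻¹ = 0 := by
  set g : ℕ → ZMod p := fun i => (((i + 1 : ℕ) : ZMod p) ^ 2)⁻¹
  have hreflect : ∀ i ∈ range m, g (m + (m - 1 - i)) = g i := by
    intro i hi
    have hi := mem_range.1 hi
    have : ((m + (m - 1 - i) + 1 : ℕ) : ZMod p) = -((i + 1 : ℕ) : ZMod p) := by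
      rw [eq_neg_iff_add_eq_zero, ← Nat.cast_add, ← ZMod.natCast_self p]
      congr 1
      omega
    simp only [g, this, neg_sq]
  have hfull : ∑ i ∈ range (m + m), g i = 0 := by
    have := ZMod.sum_range_inv_sq_eq_zero hp
    rwa [show range p = range (m + m + 1) by rw [hm, two_mul], sum_range_succ', Nat.cast_zero,
      zero_pow two_ne_zero, inv_zero, add_zero] at this
  have h2 : (2 : ZMod p) ≠ 0 := by
    intro h
    have := (ZMod.natCast_eq_zero_iff 2 p).1 (by exact_mod_cast h)
    have := Nat.le_of_dvd two_pos this
    omega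
  rw [sum_range_add, ← sum_range_reflect (fun i => g (m + i)), sum_congr rfl hreflect,
    ← two_mul] at hfull
  exact (mul_eq_zero.1 hfull).resolve_left h2

theorem Nat.prime_dvd_sum_prod_erase_mul_sub {p : ℕ} [Fact p.Prime] (hp : 3 < p) {m : ℕ}
    (hm : p = 2 * m + 1) :
    p ∣ ∑ i ∈ range m, ∏ j ∈ (range m).erase i, (j + 1) * (p - (j + 1)) := by
  set v : ℕ → ZMod p := fun j => -((j + 1 : ℕ) : ZMod p) ^ 2
  have hv : ∀ j ∈ range m, (((j + 1) * (p - (j + 1)) : ℕ) : ZMod p) = v j := by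
    intro j hj
    rw [Nat.cast_mul, Nat.cast_sub (by have := mem_range.1 hj; omega), ZMod.natCast_self]
    ring
  have hv0 : ∀ j ∈ range m, v j ≠ 0 := by
    intro j hj
    simp only [v, neg_ne_zero, pow_ne_zero_iff two_ne_zero, ne_eq, ZMod.natCast_eq_zero_iff]
    exact fun h => by have := Nat.le_of_dvd j.succ_pos h; have := mem_range.1 hj; omega
  rw [← ZMod.natCast_eq_zero_iff, Nat.cast_sum]
  calc ∑ i ∈ range m, ((∏ j ∈ (range m).erase i, (j + 1) * (p - (j + 1)) : ℕ) : ZMod p)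
      = ∑ i ∈ range m, (∏ j ∈ range m, v j) * (v i)⁻¹ := by
        refine sum_congr rfl fun i hi => ?_
        rw [Nat.cast_prod, prod_congr rfl fun j hj => hv j (mem_of_mem_erase hj),
          eq_mul_inv_iff_mul_eq₀ (hv0 i hi), prod_erase_mul _ _ hi]
    _ = -(∏ j ∈ range m, v j) * ∑ i ∈ range m, (((i + 1 : ℕ) : ZMod p) ^ 2)⁻¹ := by
        simp only [v, ← mul_sum, inv_neg, sum_neg_distrib]
        ring
    _ = 0 := by rw [ZMod.sum_range_half_inv_sq_eq_zero hp hm, mul_zero]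

theorem Nat.prod_range_mul_sub_eq_factorial {p m : ℕ} (hm : p = 2 * m + 1) :
    ∏ i ∈ range m, (i + 1) * (p - (i + 1)) = (p - 1)! := by
  rw [show p - 1 = 2 * m by omega, ← prod_range_add_one_eq_factorial,
    prod_range_two_mul_eq_prod_mul_reflect]
  refine prod_congr rfl fun i hi => congrArg _ ?_
  have := mem_range.1 hi
  omega

theorem Nat.factorial_mul_choose_mul_add_pred_eq_prod {p m : ℕ} (hm : p = 2 * m + 1) (a : ℕ) :
    (p - 1)! * (a * p + (p - 1)).choose (p - 1) =
      ∏ i ∈ range m, ((i + 1) * (p - (i + 1)) + a * (a + 1) * p ^ 2) := by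
  rw [← ascFactorial_eq_factorial_mul_choose, ascFactorial_eq_prod_range,
    show p - 1 = 2 * m by omega, prod_range_two_mul_eq_prod_mul_reflect]
  refine prod_congr rfl fun i hi => ?_
  obtain ⟨k, rfl⟩ : ∃ k, m = i + 1 + k := ⟨m - (i + 1), by have := mem_range.1 hi; omega⟩
  subst hm
  rw [show 2 * (i + 1 + k) - 1 - i = i + 1 + 2 * k by omega,
    show 2 * (i + 1 + k) + 1 - (i + 1) = i + 1 + 2 * k + 1 by omega]
  ring

theorem Nat.choose_mul_add_pred_modEq_one {p : ℕ} [hp : Fact p.Prime] (hp3 : 3 < p) (a : ℕ) :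
    (a * p + (p - 1)).choose (p - 1) ≡ 1 [MOD p ^ 3] := by
  obtain ⟨m, hm⟩ : Odd p := hp.out.odd_of_ne_two (by omega)
  set u : ℕ → ℕ := fun i => (i + 1) * (p - (i + 1))
  set c := a * (a + 1) * p ^ 2
  have hunit : IsUnit ((p - 1)! : ZMod (p ^ 3)) :=
    (ZMod.isUnit_natCast_iff_not_dvd_pow hp.out three_pos).2
      (by rw [hp.out.dvd_factorial]; omega)
  have hc2 : (c : ZMod (p ^ 3)) * c = 0 := by
    rw [← Nat.cast_mul, ZMod.natCast_eq_zero_iff]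
    exact Dvd.intro (a * (a + 1) * a * (a + 1) * p) (by ring)
  have hcS : (c : ZMod (p ^ 3)) *
      ∑ i ∈ range m, ∏ j ∈ (range m).erase i, (u j : ZMod (p ^ 3)) = 0 := by
    simp only [← Nat.cast_prod, ← Nat.cast_sum, ← Nat.cast_mul, ZMod.natCast_eq_zero_iff]
    rw [pow_succ]
    exact mul_dvd_mul (dvd_mul_left _ _) (Nat.prime_dvd_sum_prod_erase_mul_sub hp3 hm)
  have h :=
    congrArg (Nat.cast : ℕ → ZMod (p ^ 3)) (factorial_mul_choose_mul_add_pred_eq_prod hm a)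
  rw [Nat.cast_mul, Nat.cast_prod] at h
  change _ = ∏ i ∈ range m, ((u i + c : ℕ) : ZMod (p ^ 3)) at h
  simp only [Nat.cast_add] at h
  rw [prod_add_of_mul_self_eq_zero hc2, hcS, add_zero, ← Nat.cast_prod,
    prod_range_mul_sub_eq_factorial hm] at h
  rw [← ZMod.natCast_eq_natCast_iff, Nat.cast_one]
  exact hunit.mul_left_cancel (h.trans (mul_one _).symm)

theorem Nat.choose_add_one_mul_eq_add_one_mul_choose {p : ℕ} (hp : 0 < p) (a : ℕ) :
    ((a + 1) * p).choose p = (a + 1) * (a * p + (p - 1)).choose (p - 1) := by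
  have h := add_one_mul_choose_eq (a * p + (p - 1)) (p - 1)
  rw [show a * p + (p - 1) + 1 = (a + 1) * p by rw [add_one_mul]; omega,
    Nat.sub_add_cancel hp] at h
  exact Nat.eq_of_mul_eq_mul_right hp (by rw [← h]; ring)

theorem exists_fermatQuotient_eq_intCast {p a : ℕ} (hp : p.Prime) (hpa : ¬p ∣ a) :
    ∃ Q : ℤ, fermatQuotient p a = Q := by
  have hcop : IsCoprime (a : ℤ) p :=
    Nat.isCoprime_iff_coprime.2 (Nat.coprime_comm.1 (hp.coprime_iff_not_dvd.2 hpa))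
  obtain ⟨Q, hQ⟩ := (Int.ModEq.pow_card_sub_one_eq_one hp hcop).symm.dvd
  refine ⟨Q, ?_⟩
  have hp0 : (p : ℚ) ≠ 0 := by exact_mod_cast hp.ne_zero
  rw [fermatQuotient, div_eq_iff hp0]
  exact_mod_cast hQ.trans (mul_comm _ _)

theorem one_add_mul_fermatQuotient {p : ℕ} (hp : p ≠ 0) (a : ℕ) :
    1 + p * fermatQuotient p a = (a : ℚ) ^ (p - 1) := by
  have hp0 : (p : ℚ) ≠ 0 := by exact_mod_cast hp
  rw [fermatQuotient]
  field_simp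
  ring

theorem stmt2_general (p : ℕ) [Fact p.Prime] (hp : 3 < p)
    (d : ℚ) (hdu : ‖(d : ℚ_[p])‖ = 1) :
    ‖((∑ k ∈ Finset.range p,
        (1 + ((27 - 4 * (d : ℚ_[p])) / 6) * (k : ℚ_[p]) ^ 2
            + ((27 + 2 * (d : ℚ_[p])) / 6) * (k : ℚ_[p])) *
          (((3 * k).choose k : ℕ) : ℚ_[p]) / (d : ℚ_[p]) ^ k) -
      ((-27 / d : ℚ) : ℚ_[p]) ^ (p - 1) * (p : ℚ_[p]) *
        ((2 * (p : ℚ_[p]) - 1) * (1 - 3 * (p : ℚ_[p]) * (fermatQuotient p 3 : ℚ_[p]))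
          - 6 * (p : ℚ_[p]) ^ 2 * (fermatQuotient p 3 : ℚ_[p]) ^ 2)) / (p : ℚ_[p]) ^ 4‖ ≤ 1 := by
  have hprime : p.Prime := Fact.out
  obtain ⟨Q, hQ⟩ := exists_fermatQuotient_eq_intCast (a := 3) hprime
    fun h => by have := Nat.le_of_dvd three_pos h; omega
  have h27 : (-27 / d) ^ (p - 1) = (1 + p * Q) ^ 3 / d ^ (p - 1) := by
    rw [← hQ, one_add_mul_fermatQuotient hprime.ne_zero, div_pow,
      (hprime.even_sub_one (by omega)).neg_pow, ← pow_mul, mul_comm, pow_mul]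
    norm_num
  obtain ⟨J, hJ⟩ := Nat.modEq_iff_dvd.1 (Nat.choose_mul_add_pred_modEq_one hp 2).symm
  have hC : (((3 * p).choose p : ℕ) : ℚ_[p]) = 3 * (1 + p ^ 3 * J) := by
    have := congrArg (Int.cast : ℤ → ℚ_[p]) hJ
    rw [show 3 * p = (2 + 1) * p by ring, Nat.choose_add_one_mul_eq_add_one_mul_choose hprime.pos]
    push_cast at this ⊢
    linear_combination 3 * this
  have hD : (d : ℚ_[p]) ≠ 0 := norm_ne_zero_iff.1 (hdu ▸ one_ne_zero)
  have hP : (p : ℚ_[p]) ≠ 0 := by exact_mod_cast hprime.ne_zero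
  have hDp : (d : ℚ_[p]) ^ p = d ^ (p - 1) * d := by
    rw [← pow_succ, Nat.sub_add_cancel hprime.one_le]
  -- `p³ K = (2p-1)(1 + p³J) - (1+pQ)³((2p-1)(1-3pQ) - 6p²Q²)`
  set K : ℤ := (2 * p - 1) * J +
    Q ^ 2 * (12 + 10 * Q + 16 * p * Q + 15 * p * Q ^ 2 + 6 * p ^ 2 * Q ^ 2 + 6 * p ^ 2 * Q ^ 3)
  calc _ = ‖(K : ℚ_[p]) / (d : ℚ_[p]) ^ (p - 1)‖ := by
        rw [sum_range_choose_three_mul_div_pow hD, hC, ← Rat.cast_pow (-27 / d), h27, hQ, hDp]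
        congr 1
        push_cast [K]
        field_simp
        ring
    _ = ‖(K : ℚ_[p])‖ := by rw [norm_div, norm_pow, hdu, one_pow, div_one]
    _ ≤ 1 := Padic.norm_int_le_one K

theorem stmt2 (p : ℕ) [Fact p.Prime] (hp : 3 < p)
    (d : ℚ) (hd0 : d ≠ 0) (hdu : ‖(d : ℚ_[p])‖ = 1) :
    ‖((∑ k ∈ Finset.range p,
        (1 + ((27 - 4 * (d : ℚ_[p])) / 6) * (k : ℚ_[p]) ^ 2
            + ((27 + 2 * (d : ℚ_[p])) / 6) * (k : ℚ_[p])) *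
          (((3 * k).choose k : ℕ) : ℚ_[p]) / (d : ℚ_[p]) ^ k) -
      ((-27 / d : ℚ) : ℚ_[p]) ^ (p - 1) * (p : ℚ_[p]) *
        ((2 * (p : ℚ_[p]) - 1) * (1 - 3 * (p : ℚ_[p]) * (fermatQuotient p 3 : ℚ_[p]))
          - 6 * (p : ℚ_[p]) ^ 2 * (fermatQuotient p 3 : ℚ_[p]) ^ 2)) / (p : ℚ_[p]) ^ 4‖ ≤ 1 :=
  stmt2_general p hp d hdu
end

section
/- Let p > 3 be a prime and let d be a nonzero rational number that is a p-adic unit. Then ∑_{k=0}^{p−1} (1 + ((16−d)/3)k² + ((32+d)/6)k) · C(4k,2k)/d^k ≡ (−64/d)^{p−1} p((2p−1)(1 − 6p·q_p(2)) − 21p² q_p(2)²) (mod p⁴), where the congruence means the difference divided by p⁴ is a p-adic integer. -/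
open Finset

theorem Finset.prod_Ico_one_two_mul {M : Type*} [CommMonoid M] (f : ℕ → M) {n : ℕ}
    (hn : 1 ≤ n) :
    ∏ j ∈ Ico 1 (2 * n), f j = f n * ∏ j ∈ Ico 1 n, (f j * f (2 * n - j)) := by
  rw [prod_mul_distrib, ← prod_Ico_consecutive f hn (by omega : n ≤ 2 * n),
    prod_eq_prod_Ico_succ_bot (by omega : n < 2 * n),
    prod_Ico_reflect f 1 (by omega : n ≤ 2 * n + 1), show 2 * n + 1 - n = n + 1 by omega,
    show 2 * n + 1 - 1 = 2 * n by omega, mul_left_comm]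

theorem Nat.choose_four_mul_mul_prod {n : ℕ} (hn : 1 ≤ n) :
    (4 * n).choose (2 * n) * ∏ j ∈ Ico 1 n, (j * (2 * n - j))
      = 6 * ∏ j ∈ Ico 1 n, ((2 * n + j) * (2 * n + (2 * n - j))) := by
  have hasc := Nat.ascFactorial_eq_factorial_mul_choose (2 * n) (2 * n)
  have hrange : ∏ i ∈ range (2 * n), (2 * n + 1 + i) = ∏ j ∈ Ico 1 (2 * n + 1), (2 * n + j) := by
    rw [prod_Ico_eq_prod_range, Nat.add_sub_cancel]
    exact prod_congr rfl fun i _ => by ring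
  rw [Nat.ascFactorial_eq_prod_range, hrange, ← prod_Ico_id_eq_factorial,
    show 2 * n + 2 * n = 4 * n by ring, prod_Ico_succ_top (by omega), prod_Ico_succ_top (by omega),
    prod_Ico_one_two_mul _ hn, prod_Ico_one_two_mul _ hn] at hasc
  apply Nat.eq_of_mul_eq_mul_left (by positivity : 0 < 2 * n * n)
  linear_combination hasc.symm

theorem Nat.cast_choose_four_mul_mul_prod {R : Type*} [CommRing R] {n : ℕ} (hn : 1 ≤ n) :
    ((4 * n).choose (2 * n) : R) * ∏ j ∈ Ico 1 n, ((j : R) * (2 * n - j))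
      = 6 * ∏ j ∈ Ico 1 n, ((j : R) * (2 * n - j) + 8 * n ^ 2) := by
  have h := congrArg (Nat.cast : ℕ → R) (Nat.choose_four_mul_mul_prod hn)
  push_cast at h
  convert h using 2 <;> refine prod_congr rfl fun j hj => ?_ <;>
    rw [Nat.cast_sub (by grind), Nat.cast_mul] <;> push_cast <;> ring

theorem Finset.sq_dvd_prod_one_add_mul_sub {ι R : Type*} [CommRing R] (s : Finset ι) (c : R)
    (x : ι → R) : c ^ 2 ∣ ∏ i ∈ s, (1 + c * x i) - (1 + c * ∑ i ∈ s, x i) := by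
  classical
  induction s using Finset.induction_on with
  | empty => simp
  | insert k s hk ih =>
    obtain ⟨r, hr⟩ := ih
    refine ⟨x k * ∑ i ∈ s, x i + r + c * x k * r, ?_⟩
    rw [prod_insert hk, sum_insert hk]
    linear_combination (1 + c * x k) * hr

theorem ZMod.sum_Ico_inv_sq_eq_zero {p : ℕ} [Fact p.Prime] (hp : 3 < p) :
    ∑ j ∈ Ico 1 p, ((j : ZMod p) ^ 2)⁻¹ = 0 := by
  have hrange : ∑ j ∈ Ico 1 p, ((j : ZMod p) ^ 2)⁻¹ = ∑ j ∈ range p, ((j : ZMod p) ^ 2)⁻¹ := by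
    rw [range_eq_Ico, sum_eq_sum_Ico_succ_bot (a := 0) (by omega)]
    simp
  have huniv : ∑ j ∈ range p, ((j : ZMod p) ^ 2)⁻¹ = ∑ x : ZMod p, (x ^ 2)⁻¹ :=
    sum_nbij' (fun j => (j : ZMod p)) ZMod.val (fun _ _ => mem_univ _)
      (fun x _ => mem_range.2 (ZMod.val_lt x))
      (fun j hj => ZMod.val_cast_of_lt (mem_range.1 hj)) (fun x _ => ZMod.natCast_zmod_val x)
      (fun _ _ => rfl)
  simp_rw [hrange, huniv, ← inv_pow]
  calc ∑ x : ZMod p, x⁻¹ ^ 2 = ∑ x, x ^ 2 := Equiv.sum_comp (Equiv.inv (ZMod p)) (· ^ 2)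
    _ = 0 := FiniteField.sum_pow_lt_card_sub_one (ZMod p) 2 (by rw [ZMod.card]; omega)

namespace PadicInt

variable {p : ℕ} [Fact p.Prime]

theorem toZMod_eq_zero_iff_dvd (x : ℤ_[p]) : toZMod x = 0 ↔ (p : ℤ_[p]) ∣ x := by
  rw [← RingHom.mem_ker, ker_toZMod, maximalIdeal_eq_span_p, Ideal.mem_span_singleton]

theorem isUnit_iff_toZMod_ne_zero (x : ℤ_[p]) : IsUnit x ↔ toZMod x ≠ 0 := by
  rw [← IsLocalRing.notMem_maximalIdeal, ← ker_toZMod, RingHom.mem_ker]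

end PadicInt

open PadicInt in
theorem Nat.Prime.pow_three_dvd_choose_four_mul_sub_six {p : ℕ} [Fact p.Prime] (hp : 3 < p) :
    (p : ℤ) ^ 3 ∣ (4 * p).choose (2 * p) - 6 := by
  rw [← pow_p_dvd_int_iff]
  push_cast
  set a : ℕ → ℤ_[p] := fun j => j * (2 * p - j)
  have ha : ∀ j ∈ Ico 1 p, toZMod (a j) = -(j : ZMod p) ^ 2 := fun j _ => by
    simp [a, sq]
  have hunit : ∀ j ∈ Ico 1 p, IsUnit (a j) := fun j hj => by
    rw [isUnit_iff_toZMod_ne_zero, ha j hj, neg_ne_zero, pow_ne_zero_iff two_ne_zero, Ne,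
      ZMod.natCast_eq_zero_iff]
    exact Nat.not_dvd_of_pos_of_lt (by grind) (by grind)
  set x : ℕ → ℤ_[p] := fun j => 8 * Ring.inverse (a j)
  have hX : (p : ℤ_[p]) ∣ ∑ j ∈ Ico 1 p, x j := by
    have hx : ∀ j ∈ Ico 1 p, toZMod (x j) = -8 * ((j : ZMod p) ^ 2)⁻¹ := fun j hj => by
      have h := congrArg toZMod (Ring.mul_inverse_cancel _ (hunit j hj))
      rw [map_mul, map_one, ha j hj] at h
      rw [map_mul, eq_inv_of_mul_eq_one_right h, map_ofNat, inv_neg, mul_neg, neg_mul]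
    rw [← toZMod_eq_zero_iff_dvd, map_sum, sum_congr rfl hx, ← mul_sum,
      ZMod.sum_Ico_inv_sq_eq_zero hp, mul_zero]
  have hprod : ∏ j ∈ Ico 1 p, (a j + 8 * p ^ 2)
      = (∏ j ∈ Ico 1 p, a j) * ∏ j ∈ Ico 1 p, (1 + p ^ 2 * x j) := by
    rw [← prod_mul_distrib]
    refine prod_congr rfl fun j hj => ?_
    linear_combination (-8 * (p : ℤ_[p]) ^ 2) * Ring.mul_inverse_cancel _ (hunit j hj)
  have hA : ∏ j ∈ Ico 1 p, a j ≠ 0 := prod_ne_zero_iff.2 fun j hj => (hunit j hj).ne_zero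
  have hC : ((4 * p).choose (2 * p) : ℤ_[p]) - 6
      = 6 * (∏ j ∈ Ico 1 p, (1 + p ^ 2 * x j) - 1) := by
    refine mul_right_cancel₀ hA ?_
    linear_combination Nat.cast_choose_four_mul_mul_prod (R := ℤ_[p]) (by omega : 1 ≤ p)
      + 6 * hprod
  rw [hC, show ∏ j ∈ Ico 1 p, (1 + p ^ 2 * x j) - 1
      = (∏ j ∈ Ico 1 p, (1 + p ^ 2 * x j) - (1 + p ^ 2 * ∑ j ∈ Ico 1 p, x j))
        + p ^ 2 * ∑ j ∈ Ico 1 p, x j by ring]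
  refine dvd_mul_of_dvd_right (dvd_add ?_ ?_) _
  · have h := sq_dvd_prod_one_add_mul_sub (Ico 1 p) ((p : ℤ_[p]) ^ 2) x
    rw [← pow_mul] at h
    exact (pow_dvd_pow _ (by norm_num)).trans h
  · obtain ⟨y, hy⟩ := hX
    exact ⟨y, by rw [hy]; ring⟩

theorem Nat.choose_four_mul_add_four_mul (n : ℕ) :
    (4 * n + 4).choose (2 * n + 2) * ((2 * n + 1) * (2 * n + 2))
      = 4 * (4 * n + 1) * (4 * n + 3) * (4 * n).choose (2 * n) := by
  have h₁ := Nat.succ_mul_centralBinom_succ (2 * n)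
  have h₂ := Nat.succ_mul_centralBinom_succ (2 * n + 1)
  simp only [Nat.centralBinom_eq_two_mul_choose, show 2 * (2 * n + 1) = 4 * n + 2 by ring,
    show 2 * (2 * n) = 4 * n by ring, show 2 * (2 * n + 1 + 1) = 4 * n + 4 by ring] at h₁ h₂
  linear_combination (2 * n + 1) * h₂ + 2 * (4 * n + 3) * h₁

theorem sum_range_choose_four_mul_div_pow {K : Type*} [Field K] [CharZero K] {d : K}
    (hd : d ≠ 0) (n : ℕ) :
    ∑ k ∈ range n, (1 + (16 - d) / 3 * (k : K) ^ 2 + (32 + d) / 6 * k) *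
        ((4 * k).choose (2 * k) : K) / d ^ k
      = d / 6 * n * (2 * n - 1) * ((4 * n).choose (2 * n) : K) / d ^ n := by
  induction n with
  | zero => simp
  | succ n ih =>
    have h := congrArg (Nat.cast : ℕ → K) (Nat.choose_four_mul_add_four_mul n)
    push_cast at h
    rw [sum_range_succ, ih, show 4 * (n + 1) = 4 * n + 4 by ring,
      show 2 * (n + 1) = 2 * n + 2 by ring, ← add_div, pow_succ d n,
      div_eq_div_iff (pow_ne_zero _ hd) (mul_ne_zero (pow_ne_zero _ hd) hd)]
    push_cast
    linear_combination (-d ^ n * d / 12) * h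

theorem pow_three_dvd_of_dvd_of_pow_three_dvd_sub_six {R : Type*} [CommRing R] {P T C : R}
    (hT : P ∣ T) (hC : P ^ 3 ∣ C - 6) :
    P ^ 3 ∣ (2 * P - 1) * C - 6 * (1 + T) ^ 6 * ((2 * P - 1) * (1 - 6 * T) - 21 * T ^ 2) := by
  obtain ⟨s, rfl⟩ := hT
  obtain ⟨c, hc⟩ := hC
  -- the expression is `(2P - 1)(C - 6) + P T² f(T) + T³ g(T)` for explicit polynomials `f`, `g`
  refine ⟨(2 * P - 1) * c + s ^ 2 * (252 + 840 * (P * s) + 1260 * (P * s) ^ 2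
    + 1008 * (P * s) ^ 3 + 420 * (P * s) ^ 4 + 72 * (P * s) ^ 5) + s ^ 3 * (336 + 1260 * (P * s)
    + 2016 * (P * s) ^ 2 + 1680 * (P * s) ^ 3 + 720 * (P * s) ^ 4 + 126 * (P * s) ^ 5), ?_⟩
  linear_combination (2 * P - 1) * hc

theorem Padic.norm_six {p : ℕ} [Fact p.Prime] (hp : 3 < p) : ‖(6 : ℚ_[p])‖ = 1 := by
  have hprime : p.Prime := Fact.out
  have h : p.Coprime (2 * 3) := Nat.Coprime.mul_right
    ((Nat.coprime_primes hprime Nat.prime_two).2 (by omega))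
    ((Nat.coprime_primes hprime Nat.prime_three).2 (by omega))
  exact_mod_cast Padic.norm_natCast_eq_one_iff.2 h

theorem stmt3_general (p : ℕ) [Fact p.Prime] (hp : 3 < p)
    (d : ℚ) (hdu : ‖(d : ℚ_[p])‖ = 1) :
    ‖((∑ k ∈ Finset.range p,
        (1 + ((16 - (d : ℚ_[p])) / 3) * (k : ℚ_[p]) ^ 2
            + ((32 + (d : ℚ_[p])) / 6) * (k : ℚ_[p])) *
          (((4 * k).choose (2 * k) : ℕ) : ℚ_[p]) / (d : ℚ_[p]) ^ k) -
      ((-64 / d : ℚ) : ℚ_[p]) ^ (p - 1) * (p : ℚ_[p]) *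
        ((2 * (p : ℚ_[p]) - 1) * (1 - 6 * (p : ℚ_[p]) * (fermatQuotient p 2 : ℚ_[p]))
          - 21 * (p : ℚ_[p]) ^ 2 * (fermatQuotient p 2 : ℚ_[p]) ^ 2)) / (p : ℚ_[p]) ^ 4‖ ≤ 1 := by
  have hprime : p.Prime := Fact.out
  have hD : (d : ℚ_[p]) ≠ 0 := norm_ne_zero_iff.1 (by rw [hdu]; exact one_ne_zero)
  have hP : (p : ℚ_[p]) ≠ 0 := Nat.cast_ne_zero.2 hprime.ne_zero
  have hfermat : (p : ℤ) ∣ 2 ^ (p - 1) - 1 :=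
    (Int.ModEq.pow_card_sub_one_eq_one (n := 2) hprime (Nat.isCoprime_iff_coprime.2
      ((Nat.coprime_primes Nat.prime_two hprime).2 (by omega)))).symm.dvd
  obtain ⟨w, hw⟩ := pow_three_dvd_of_dvd_of_pow_three_dvd_sub_six hfermat
    (Nat.Prime.pow_three_dvd_choose_four_mul_sub_six hp)
  have hw' := congrArg (Int.cast : ℤ → ℚ_[p]) hw
  push_cast at hw'
  have h64 : (-64 : ℚ_[p]) ^ (p - 1) = (2 ^ (p - 1)) ^ 6 := by
    rw [(hprime.even_sub_one (by omega)).neg_pow, ← pow_mul, mul_comm, pow_mul]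
    norm_num
  have hDp : (d : ℚ_[p]) ^ p = d ^ (p - 1) * d := by
    rw [← pow_succ, Nat.sub_add_cancel hprime.one_le]
  rw [sum_range_choose_four_mul_div_pow hD, fermatQuotient]
  push_cast
  rw [div_pow, h64, hDp]
  convert_to ‖(w : ℚ_[p]) / (6 * (d : ℚ_[p]) ^ (p - 1))‖ ≤ 1 using 2
  · field_simp
    linear_combination hw'
  rw [norm_div, norm_mul, norm_pow, hdu, one_pow, mul_one, Padic.norm_six hp, div_one]
  exact Padic.norm_int_le_one w

theorem stmt3 (p : ℕ) [Fact p.Prime] (hp : 3 < p)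
    (d : ℚ) (hd0 : d ≠ 0) (hdu : ‖(d : ℚ_[p])‖ = 1) :
    ‖((∑ k ∈ Finset.range p,
        (1 + ((16 - (d : ℚ_[p])) / 3) * (k : ℚ_[p]) ^ 2
            + ((32 + (d : ℚ_[p])) / 6) * (k : ℚ_[p])) *
          (((4 * k).choose (2 * k) : ℕ) : ℚ_[p]) / (d : ℚ_[p]) ^ k) -
      ((-64 / d : ℚ) : ℚ_[p]) ^ (p - 1) * (p : ℚ_[p]) *
        ((2 * (p : ℚ_[p]) - 1) * (1 - 6 * (p : ℚ_[p]) * (fermatQuotient p 2 : ℚ_[p]))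
          - 21 * (p : ℚ_[p]) ^ 2 * (fermatQuotient p 2 : ℚ_[p]) ^ 2)) / (p : ℚ_[p]) ^ 4‖ ≤ 1 :=
  stmt3_general p hp d hdu
end

section
/- Let p ≥ 3 be a prime, let d be a nonzero rational number that is a p-adic unit, let x be a p-adic integer with ⟨x⟩_p > (p−1)/2, and set m := (x − ⟨x⟩_p)/p ∈ ℤ_p. Then ∑_{k=0}^{(p−1)/2} (x² + x − (1+4d)k² − (1−2d)k) · d^{−k} · C(x,k)C(x+k,k)/C(2k,k) ≡ ((1+m)p / d^{(p−1)/2}) · C(⟨x⟩_p + (p+1)/2, p+1) (mod p²), where the congruence means the difference divided by p² is a p-adic integer. -/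
/-!
The summand is `C(x + k, 2k)` in disguise, since `C(x, k) C(x + k, k) / C(2k, k) = C(x + k, 2k)`,
and the sum telescopes: over `k ≤ n` it equals `(2n + 2)(2n + 1) d⁻ⁿ C(x + n + 1, 2n + 2)`.
For `p = 2n + 1` this is `(p + 1) p d⁻ⁿ C(x + n + 1, p + 1)`, where `x + n + 1 = c + p(1 + m)`
with `c = ⟨x⟩_p + n + 1 - p ≤ p`. The products `∏_{i ≤ p} (x + n + 1 - i)` and
`∏_{i ≤ p} (c + p - i) = (p + 1)! C(⟨x⟩_p + (p + 1)/2, p + 1)` have the factors `p(1 + m)` and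
`p` at `i = c`, and their remaining factors agree modulo `p`. Since `(p + 1)!` has valuation
exactly one, the congruence modulo `p²` follows.
-/

/-- Generalized binomial coefficient `C(x, k) = x(x-1)⋯(x-k+1)/k!` in `ℚ_[p]`. -/
noncomputable def gbinom (p : ℕ) [Fact p.Prime] (x : ℚ_[p]) (k : ℕ) : ℚ_[p] :=
  (∏ i ∈ Finset.range k, (x - (i : ℚ_[p]))) / (k.factorial : ℚ_[p])

open Finset

theorem sq_dvd_mul_prod_sub_mul_prod {R ι : Type*} [CommRing R] [DecidableEq ι] {s : Finset ι}
    {f g : ι → R} {q u v : R} {c : ι} (hc : c ∈ s) (hfc : f c = q * u) (hgc : g c = q * v)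
    (hfg : ∀ i ∈ s, q ∣ f i - g i) :
    q ^ 2 ∣ v * ∏ i ∈ s, f i - u * ∏ i ∈ s, g i := by
  have hrest : q ∣ ∏ i ∈ s.erase c, f i - ∏ i ∈ s.erase c, g i := by
    rw [← Ideal.mem_span_singleton, ← SModEq.sub_mem]
    exact SModEq.prod fun i hi ↦ SModEq.sub_mem.mpr <|
      Ideal.mem_span_singleton.mpr (hfg i (mem_of_mem_erase hi))
  rw [← mul_prod_erase s f hc, ← mul_prod_erase s g hc, hfc, hgc]
  obtain ⟨t, ht⟩ := hrest
  exact ⟨u * v * t, by linear_combination q * u * v * ht⟩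

theorem sq_dvd_add_one_mul_prod_sub_mul_prod {R : Type*} [CommRing R] (q u : R) {c N : ℕ}
    (hc : c < N) :
    q ^ 2 ∣ (q + 1) * ∏ i ∈ range N, ((c : R) + q * u - i) -
      u * ∏ i ∈ range N, ((c : R) + q - i) := by
  have hcmem : c ∈ range N := mem_range.mpr hc
  have hsq := sq_dvd_mul_prod_sub_mul_prod hcmem (f := fun i : ℕ ↦ (c : R) + q * u - i)
    (g := fun i : ℕ ↦ (c : R) + q - i) (q := q) (u := u) (v := 1)
    (by ring) (by ring) fun i _ ↦ ⟨u - 1, by ring⟩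
  have hq : q ∣ ∏ i ∈ range N, ((c : R) + q * u - i) :=
    (Dvd.intro u (by ring)).trans (dvd_prod_of_mem _ hcmem)
  convert dvd_add (sq q ▸ mul_dvd_mul_left q hq) hsq using 1
  ring

theorem Padic.norm_natCast_factorial_succ (p : ℕ) [hp : Fact p.Prime] :
    ‖((p + 1).factorial : ℚ_[p])‖ = (p : ℝ)⁻¹ := by
  have hcoprime : p.Coprime ((p + 1) * (p - 1).factorial) :=
    Nat.Coprime.mul_right (Nat.coprime_self_add_right.mpr (Nat.coprime_one_right p))
      (hp.out.coprime_factorial_of_lt (Nat.sub_lt hp.out.pos one_pos))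
  rw [Nat.factorial_succ, ← Nat.mul_factorial_pred hp.out.ne_zero, mul_left_comm, Nat.cast_mul,
    norm_mul, norm_p, Padic.norm_natCast_eq_one_iff.mpr hcoprime, mul_one]

section gbinom

variable {p : ℕ} [Fact p.Prime]

variable (p) in
theorem gbinom_natCast {N k : ℕ} (h : k ≤ N) : gbinom p N k = N.choose k := by
  have hprod : ∏ i ∈ range k, ((N : ℚ_[p]) - i) = N.descFactorial k := by
    rw [Nat.descFactorial_eq_prod_range, Nat.cast_prod]
    exact prod_congr rfl fun i hi ↦ by rw [Nat.cast_sub (by grind)]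
  rw [gbinom, hprod, Nat.descFactorial_eq_factorial_mul_choose, Nat.cast_mul,
    mul_div_cancel_left₀ _ (Nat.cast_ne_zero.mpr k.factorial_ne_zero)]

theorem gbinom_coe (y : ℤ_[p]) (k : ℕ) :
    gbinom p y k = ((∏ i ∈ range k, (y - (i : ℤ_[p])) : ℤ_[p]) : ℚ_[p]) / k.factorial := by
  rw [gbinom, show ((∏ i ∈ range k, (y - (i : ℤ_[p])) : ℤ_[p]) : ℚ_[p]) =
    PadicInt.Coe.ringHom (∏ i ∈ range k, (y - (i : ℤ_[p]))) from rfl, map_prod]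
  simp only [map_sub, map_natCast]
  rfl

theorem gbinom_mul_gbinom_div_choose (x : ℚ_[p]) (k : ℕ) :
    gbinom p x k * gbinom p (x + k) k / ((2 * k).choose k : ℕ) = gbinom p (x + k) (2 * k) := by
  have hprod : ∏ i ∈ range (2 * k), (x + k - i) =
      (∏ i ∈ range k, (x + k - i)) * ∏ i ∈ range k, (x - i) := by
    rw [two_mul, prod_range_add]
    exact congrArg _ (prod_congr rfl fun i _ ↦ by push_cast; ring)
  have hfac : ((2 * k).choose k : ℚ_[p]) * k.factorial * k.factorial = (2 * k).factorial := by
    have := Nat.choose_mul_factorial_mul_factorial (show k ≤ 2 * k by omega)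
    rw [show 2 * k - k = k by omega] at this
    exact_mod_cast this
  have hchoose : ((2 * k).choose k : ℚ_[p]) ≠ 0 :=
    Nat.cast_ne_zero.mpr (Nat.choose_pos (by omega)).ne'
  rw [gbinom, gbinom, gbinom, hprod, ← hfac]
  field_simp

theorem mul_gbinom_add_two (y : ℚ_[p]) (j : ℕ) :
    ((j : ℚ_[p]) + 2) * (j + 1) * gbinom p y (j + 2) =
      y * (y - (j + 1)) * gbinom p (y - 1) j := by
  have hprod :
      ∏ i ∈ range (j + 2), (y - i) = y * (y - (j + 1)) * ∏ i ∈ range j, (y - 1 - i) := by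
    rw [prod_range_succ, prod_range_succ']
    rw [prod_congr rfl fun i _ ↦ (by push_cast; ring : y - ((i + 1 : ℕ) : ℚ_[p]) = y - 1 - i)]
    push_cast
    ring
  have hfac : ((j + 2).factorial : ℚ_[p]) = ((j : ℚ_[p]) + 2) * (j + 1) * j.factorial := by
    rw [Nat.factorial_succ, Nat.factorial_succ]
    push_cast
    ring
  have hj : (j : ℚ_[p]) + 2 ≠ 0 := by exact_mod_cast (j + 1).succ_ne_zero
  rw [gbinom, gbinom, hprod, hfac]
  field_simp

theorem sum_range_eq_mul_gbinom (x d : ℚ_[p]) (hd : d ≠ 0) (n : ℕ) :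
    ∑ k ∈ range (n + 1), (x ^ 2 + x - (1 + 4 * d) * (k : ℚ_[p]) ^ 2 - (1 - 2 * d) * k) *
        (d ^ (-(k : ℤ)) * gbinom p x k * gbinom p (x + k) k / ((2 * k).choose k : ℕ)) =
      ((2 * n + 2 : ℕ) : ℚ_[p]) * ((2 * n + 1 : ℕ) : ℚ_[p]) * (d ^ n)⁻¹ *
        gbinom p (x + n + 1) (2 * n + 2) := by
  have hterm : ∀ k : ℕ, d ^ (-(k : ℤ)) * gbinom p x k * gbinom p (x + k) k /
      ((2 * k).choose k : ℕ) = (d ^ k)⁻¹ * gbinom p (x + k) (2 * k) := fun k ↦ by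
    rw [zpow_neg, zpow_natCast, mul_assoc, mul_div_assoc, gbinom_mul_gbinom_div_choose]
  simp only [hterm]
  induction n with
  | zero => simp [gbinom, prod_range_succ]; ring
  | succ n ih =>
    have hstep := mul_gbinom_add_two (p := p) (x + n + 2) (2 * n + 2)
    rw [show x + n + 2 - 1 = x + n + 1 by ring] at hstep
    rw [sum_range_succ, ih, show 2 * (n + 1) = 2 * n + 2 by ring]
    push_cast at hstep ⊢
    rw [show x + ((n : ℚ_[p]) + 1) + 1 = x + n + 2 by ring,
      show x + ((n : ℚ_[p]) + 1) = x + n + 1 by ring]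
    field_simp
    rw [pow_succ]
    linear_combination -d ^ n * hstep

theorem norm_add_one_mul_gbinom_sub_div_le_one {c : ℕ} (hc : c ≤ p) (u : ℤ_[p]) :
    ‖(((p : ℚ_[p]) + 1) * gbinom p (c + p * u) (p + 1) - u * gbinom p (c + p) (p + 1)) / p‖
      ≤ 1 := by
  obtain ⟨w, hw⟩ := sq_dvd_add_one_mul_prod_sub_mul_prod (p : ℤ_[p]) u (Nat.lt_succ_of_le hc)
  have hp : (p : ℚ_[p]) ≠ 0 := Nat.cast_ne_zero.mpr (Fact.out : p.Prime).ne_zero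
  have hexpr :
      (((p : ℚ_[p]) + 1) * gbinom p (c + p * u) (p + 1) - u * gbinom p (c + p) (p + 1)) / p =
        ((p : ℤ_[p]) ^ 2 * w : ℤ_[p]) / (p * (p + 1).factorial) := by
    rw [← hw, show (c : ℚ_[p]) + p * u = ((c + p * u : ℤ_[p]) : ℚ_[p]) by push_cast; ring,
      show (c : ℚ_[p]) + p = ((c + p : ℤ_[p]) : ℚ_[p]) by push_cast; ring,
      gbinom_coe, gbinom_coe]
    push_cast
    field_simp
  rw [hexpr, norm_div, norm_mul, Padic.norm_natCast_factorial_succ,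
    PadicInt.padic_norm_e_of_padicInt, norm_mul, norm_pow, PadicInt.norm_p, Padic.norm_p]
  have hp0 : ((p : ℝ)⁻¹ * (p : ℝ)⁻¹) ≠ 0 := by have := (Fact.out : p.Prime).pos; positivity
  rw [sq, mul_div_cancel_left₀ _ hp0]
  exact PadicInt.norm_le_one w

end gbinom

theorem stmt7_general (p : ℕ) [Fact p.Prime] (hp : 3 ≤ p)
    (d : ℚ) (hdu : ‖(d : ℚ_[p])‖ = 1)
    (x m : ℤ_[p]) (a : ℕ) (ha : (p - 1) / 2 < a) (ha' : a < p)
    (hx : (x : ℚ_[p]) = (a : ℚ_[p]) + (p : ℚ_[p]) * (m : ℚ_[p])) :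
    ‖((∑ k ∈ Finset.range ((p - 1) / 2 + 1),
        ((x : ℚ_[p]) ^ 2 + (x : ℚ_[p]) - (1 + 4 * (d : ℚ_[p])) * (k : ℚ_[p]) ^ 2
            - (1 - 2 * (d : ℚ_[p])) * (k : ℚ_[p])) *
          ((d : ℚ_[p]) ^ (-(k : ℤ)) * gbinom p (x : ℚ_[p]) k * gbinom p ((x : ℚ_[p]) + (k : ℚ_[p])) k
            / (((2 * k).choose k : ℕ) : ℚ_[p]))) -
      ((1 + (m : ℚ_[p])) * (p : ℚ_[p]) / (d : ℚ_[p]) ^ ((p - 1) / 2)) *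
        (((a + (p + 1) / 2).choose (p + 1) : ℕ) : ℚ_[p])) / (p : ℚ_[p]) ^ 2‖ ≤ 1 := by
  have hodd : p % 2 = 1 := Nat.odd_iff.mp ((Fact.out : p.Prime).odd_of_ne_two (by omega))
  set n := (p - 1) / 2
  set c := a + n + 1 - p
  have hd : (d : ℚ_[p]) ≠ 0 := norm_ne_zero_iff.mp (hdu ▸ one_ne_zero)
  have hsum := sum_range_eq_mul_gbinom (x : ℚ_[p]) (d : ℚ_[p]) hd n
  rw [show 2 * n + 2 = p + 1 by omega, show 2 * n + 1 = p by omega] at hsum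
  have hpx : (x : ℚ_[p]) + n + 1 = c + p * (1 + m) := by
    have hc : ((a + n + 1 : ℕ) : ℚ_[p]) = (c + p : ℕ) := congrArg _ (by omega)
    push_cast at hc ⊢
    linear_combination hx + hc
  have hchoose : ((a + (p + 1) / 2).choose (p + 1) : ℚ_[p]) = gbinom p (c + p) (p + 1) := by
    rw [show a + (p + 1) / 2 = c + p by omega, ← gbinom_natCast p (by omega), Nat.cast_add]
  have hbound := norm_add_one_mul_gbinom_sub_div_le_one (p := p) (c := c) (by omega) (1 + m)
  push_cast at hbound hsum
  rw [hsum, hpx, hchoose, show ∀ A B D M : ℚ_[p],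
      ((p + 1) * p * (D ^ n)⁻¹ * A - (1 + M) * p / D ^ n * B) / p ^ 2 =
        (D ^ n)⁻¹ * (((p + 1) * A - (1 + M) * B) / p) by intros; field_simp]
  rw [norm_mul, norm_inv, norm_pow, hdu, one_pow, inv_one, one_mul]
  exact hbound

theorem stmt7 (p : ℕ) [Fact p.Prime] (hp : 3 ≤ p)
    (d : ℚ) (hd0 : d ≠ 0) (hdu : ‖(d : ℚ_[p])‖ = 1)
    (x m : ℤ_[p]) (a : ℕ) (ha : (p - 1) / 2 < a) (ha' : a < p)
    (hx : (x : ℚ_[p]) = (a : ℚ_[p]) + (p : ℚ_[p]) * (m : ℚ_[p])) :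
    ‖((∑ k ∈ Finset.range ((p - 1) / 2 + 1),
        ((x : ℚ_[p]) ^ 2 + (x : ℚ_[p]) - (1 + 4 * (d : ℚ_[p])) * (k : ℚ_[p]) ^ 2
            - (1 - 2 * (d : ℚ_[p])) * (k : ℚ_[p])) *
          ((d : ℚ_[p]) ^ (-(k : ℤ)) * gbinom p (x : ℚ_[p]) k * gbinom p ((x : ℚ_[p]) + (k : ℚ_[p])) k
            / (((2 * k).choose k : ℕ) : ℚ_[p]))) -
      ((1 + (m : ℚ_[p])) * (p : ℚ_[p]) / (d : ℚ_[p]) ^ ((p - 1) / 2)) *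
        (((a + (p + 1) / 2).choose (p + 1) : ℕ) : ℚ_[p])) / (p : ℚ_[p]) ^ 2‖ ≤ 1 :=
  stmt7_general p hp d hdu x m a ha ha' hx
end

section
/- Let p > 3 be a prime and let d be a nonzero rational number that is a p-adic unit. Then ∑_{k=0}^{(p−1)/2} (1 + (4−d)k² + ((8+d)/2)k) · C(2k,k)/d^k ≡ (−1/d)^{(p−1)/2} p² (1 + 2p·q_p(2) + p² q_p(2)²) (mod p⁵), where the congruence means the difference divided by p⁵ is a p-adic integer. -/
open Finset

theorem sum_range_mul_choose_div_pow {K : Type*} [Field K] [CharZero K] {d : K} (hd : d ≠ 0)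
    (n : ℕ) :
    ∑ k ∈ range (n + 1),
      (1 + (4 - d) * (k : K) ^ 2 + (8 + d) / 2 * k) * ((2 * k).choose k : ℕ) / d ^ k
      = (2 * n + 1) ^ 2 * ((2 * n).choose n : ℕ) / d ^ n := by
  induction n with
  | zero => norm_num
  | succ n ih =>
    have hn : (n : K) + 1 ≠ 0 := Nat.cast_add_one_ne_zero n
    have hrec : ((2 * (n + 1)).choose (n + 1) : ℕ)
        = 2 * (2 * n + 1) * ((2 * n).choose n : ℕ) / ((n : K) + 1) := by
      rw [eq_div_iff hn, mul_comm]
      exact_mod_cast Nat.succ_mul_centralBinom_succ n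
    rw [sum_range_succ, ih, hrec]
    field_simp
    push_cast
    ring

theorem two_mul_sum_range_choose_add_choose (n : ℕ) :
    2 * ∑ k ∈ range n, (2 * n).choose k + (2 * n).choose n = 4 ^ n := by
  have hupper :
      ∑ k ∈ range n, (2 * n).choose (n + (k + 1)) = ∑ k ∈ range n, (2 * n).choose k := by
    rw [← sum_range_reflect (fun k ↦ (2 * n).choose k) n]
    refine sum_congr rfl fun k hk ↦ ?_
    have := mem_range.1 hk
    rw [← Nat.choose_symm (by omega : n + (k + 1) ≤ 2 * n)]
    congr 1
    omega
  rw [show 4 ^ n = 2 ^ (2 * n) by rw [pow_mul]; norm_num, ← Nat.sum_range_choose,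
    show 2 * n + 1 = n + (n + 1) by omega, sum_range_add, sum_range_succ', hupper, add_zero]
  ring

theorem sum_range_eq_add_sum_Icc {M : Type*} [AddCommMonoid M] {n : ℕ} (hn : 0 < n)
    (f : ℕ → M) :
    ∑ k ∈ range n, f k = f 0 + ∑ k ∈ Icc 1 (n - 1), f k := by
  obtain ⟨n, rfl⟩ := Nat.exists_eq_add_of_lt hn
  rw [sum_range_eq_add_Ico f hn, zero_add, add_tsub_cancel_right, Ico_add_one_right_eq_Icc]

theorem sum_Icc_two_mul_eq_add_sum_reflect {M : Type*} [AddCommMonoid M] (m : ℕ) (f : ℕ → M) :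
    ∑ k ∈ Icc 1 (2 * m), f k
      = ∑ k ∈ Icc 1 m, f k + ∑ k ∈ Icc 1 m, f (2 * m + 1 - k) := by
  have hIcc : ∀ n, Icc 1 n = Ioc 0 n := fun n ↦ Icc_add_one_left_eq_Ioc 0 n
  rw [hIcc, hIcc, ← sum_Ioc_consecutive f (Nat.zero_le m) (by omega : m ≤ 2 * m)]
  congr 1
  refine sum_nbij' (fun k ↦ 2 * m + 1 - k) (fun k ↦ 2 * m + 1 - k) ?_ ?_ ?_ ?_ ?_ <;>
    intro k hk <;> simp only [mem_Ioc] at hk ⊢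
  all_goals first | omega | (congr 1; omega)

theorem Nat.cast_add_one_mul_choose_succ {R : Type*} [CommRing R] (N k : ℕ) :
    ((k : R) + 1) * (N.choose (k + 1) : ℕ) = ((N : R) - k) * (N.choose k : ℕ) := by
  rcases le_or_gt k N with h | h
  · have hnat := congrArg (Nat.cast : ℕ → R) (Nat.choose_succ_right_eq N k)
    push_cast [Nat.cast_sub h] at hnat
    linear_combination hnat
  · simp [Nat.choose_eq_zero_of_lt h, Nat.choose_eq_zero_of_lt (h.trans k.lt_succ_self)]

theorem mul_prod_one_sub_mul_of_pow_three_eq_zero {R ι : Type*} [CommRing R] (s : Finset ι)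
    (u : ι → R) {x : R} (hx : x ^ 3 = 0) :
    x * ∏ j ∈ s, (1 - x * u j) = x - x ^ 2 * ∑ j ∈ s, u j := by
  classical
  induction s using Finset.induction_on with
  | empty => simp
  | insert a s ha ih =>
    rw [prod_insert ha, sum_insert ha]
    linear_combination (1 - x * u a) * ih + u a * (∑ j ∈ s, u j) * hx

theorem two_mul_prod_one_sub_mul_of_pow_three_eq_zero {R ι : Type*} [CommRing R] (s : Finset ι)
    (u : ι → R) {x : R} (hx : x ^ 3 = 0) :
    2 * ∏ j ∈ s, (1 - x * u j)
      = 2 - 2 * x * ∑ j ∈ s, u j + x ^ 2 * ((∑ j ∈ s, u j) ^ 2 - ∑ j ∈ s, u j ^ 2) := by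
  classical
  induction s using Finset.induction_on with
  | empty => simp
  | insert a s ha ih =>
    rw [prod_insert ha, sum_insert ha, sum_insert ha]
    linear_combination
      (1 - x * u a) * ih - u a * ((∑ j ∈ s, u j) ^ 2 - ∑ j ∈ s, u j ^ 2) * hx

theorem four_pow_eq_sq_two_pow {R : Type*} [Semiring R] (n : ℕ) : (4 : R) ^ n = (2 ^ n) ^ 2 := by
  rw [← pow_mul, mul_comm, pow_mul]
  norm_num

theorem ZMod.natCast_pow_eq_zero (n k : ℕ) : (n : ZMod (n ^ k)) ^ k = 0 := by
  rw [← Nat.cast_pow, ZMod.natCast_self]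

theorem ZMod.sum_eq_sum_range {M : Type*} [AddCommMonoid M] (n : ℕ) [NeZero n]
    (g : ZMod n → M) :
    ∑ x, g x = ∑ k ∈ range n, g k := by
  refine sum_nbij' ZMod.val Nat.cast (fun x _ ↦ mem_range.2 x.val_lt) (fun _ _ ↦ mem_univ _)
    (fun x _ ↦ ZMod.natCast_zmod_val x) (fun k hk ↦ ZMod.val_cast_of_lt (mem_range.1 hk)) ?_
  intro x _
  rw [ZMod.natCast_zmod_val]

theorem ZMod.castHom_natCast_inv {m n : ℕ} (h : m ∣ n) {k : ℕ} (hk : k.Coprime n) :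
    ZMod.castHom h (ZMod m) (k : ZMod n)⁻¹ = (k : ZMod m)⁻¹ := by
  refine (ZMod.inv_eq_of_mul_eq_one _ _ _ ?_).symm
  rw [← map_natCast (ZMod.castHom h (ZMod m)) k, ← map_mul, ZMod.coe_mul_inv_eq_one k hk,
    map_one]

theorem ZMod.exists_eq_natCast_mul_of_castHom_eq_zero {m n : ℕ} [NeZero n] (h : m ∣ n)
    {x : ZMod n} (hx : ZMod.castHom h (ZMod m) x = 0) : ∃ y : ZMod n, x = m * y := by
  rw [← ZMod.natCast_zmod_val x, map_natCast, ZMod.natCast_eq_zero_iff] at hx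
  obtain ⟨t, ht⟩ := hx
  exact ⟨t, by rw [← ZMod.natCast_zmod_val x, ht, Nat.cast_mul]⟩

-- `(k : ZMod (p ^ 3))⁻¹` is a true inverse only when `p ∤ k`; the sums are used only below `p`
def harmonicMod (p n : ℕ) : ZMod (p ^ 3) := ∑ k ∈ Icc 1 n, (k : ZMod (p ^ 3))⁻¹

def altHarmonicMod (p : ℕ) : ZMod (p ^ 3) :=
  ∑ k ∈ Icc 1 (p - 1), (-1) ^ (k + 1) * (k : ZMod (p ^ 3))⁻¹

def altHarmonicMulHarmonicMod (p : ℕ) : ZMod (p ^ 3) :=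
  ∑ k ∈ Icc 1 (p - 1), (-1) ^ (k + 1) * (k : ZMod (p ^ 3))⁻¹ * harmonicMod p (k - 1)

section PrimePower

variable {p : ℕ} [Fact p.Prime]

theorem coprime_pow_of_not_dvd {e k : ℕ} (hk : ¬p ∣ k) : k.Coprime (p ^ e) :=
  Nat.Coprime.pow_right e ((Nat.Prime.coprime_iff_not_dvd Fact.out).2 hk).symm

theorem isUnit_natCast_of_not_dvd {e k : ℕ} (hk : ¬p ∣ k) : IsUnit (k : ZMod (p ^ e)) :=
  (ZMod.isUnit_iff_coprime k _).2 (coprime_pow_of_not_dvd hk)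

theorem natCast_mul_inv_of_not_dvd {e k : ℕ} (hk : ¬p ∣ k) :
    (k : ZMod (p ^ e)) * (k : ZMod (p ^ e))⁻¹ = 1 :=
  ZMod.coe_mul_inv_eq_one k (coprime_pow_of_not_dvd hk)

theorem isUnit_two_of_two_lt (hp : 2 < p) {e : ℕ} : IsUnit (2 : ZMod (p ^ e)) := by
  exact_mod_cast isUnit_natCast_of_not_dvd (p := p) (e := e) (k := 2)
    (Nat.not_dvd_of_pos_of_lt two_pos hp)

theorem natCast_choose_eq_prod {e N k : ℕ} (hk : k < p) :
    (N.choose k : ZMod (p ^ e))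
      = (-1) ^ k * ∏ j ∈ Icc 1 k, (1 - (N + 1) * (j : ZMod (p ^ e))⁻¹) := by
  induction k with
  | zero => simp
  | succ k ih =>
    have hinv := natCast_mul_inv_of_not_dvd (e := e) (Nat.not_dvd_of_pos_of_lt k.succ_pos hk)
    have hrec := Nat.cast_add_one_mul_choose_succ (R := ZMod (p ^ e)) N k
    rw [prod_Icc_succ_top (by omega)]
    push_cast at hinv ⊢
    linear_combination (k + 1 : ZMod (p ^ e))⁻¹ * hrec
      - ((N.choose (k + 1) : ℕ) + (N.choose k : ℕ) : ZMod (p ^ e)) * hinv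
      - (1 - (N + 1) * (k + 1 : ZMod (p ^ e))⁻¹) * ih (by omega)

theorem sum_Icc_inv_sq_eq_zero (hp : 3 < p) :
    ∑ k ∈ Icc 1 (p - 1), ((k : ZMod p)⁻¹) ^ 2 = 0 := by
  have hsq : ∑ x : ZMod p, x ^ 2 = 0 :=
    FiniteField.sum_pow_lt_card_sub_one (ZMod p) 2 (by rw [ZMod.card]; omega)
  have hinv : ∑ x : ZMod p, (x⁻¹) ^ 2 = 0 :=
    (Equiv.sum_comp (Equiv.inv (ZMod p)) (· ^ 2)).trans hsq
  rw [ZMod.sum_eq_sum_range, sum_range_eq_add_sum_Icc (Fact.out : p.Prime).pos] at hinv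
  simpa using hinv

theorem sum_Icc_half_inv_sq_eq_zero (hp : 3 < p) {m : ℕ} (hm : p = 2 * m + 1) :
    ∑ k ∈ Icc 1 m, ((k : ZMod p)⁻¹) ^ 2 = 0 := by
  have hfull := sum_Icc_inv_sq_eq_zero hp
  rw [show p - 1 = 2 * m by omega, sum_Icc_two_mul_eq_add_sum_reflect] at hfull
  have hreflect :
      ∀ k ∈ Icc 1 m, (((2 * m + 1 - k : ℕ) : ZMod p)⁻¹) ^ 2 = ((k : ZMod p)⁻¹) ^ 2 := by
    intro k hk
    rw [Nat.cast_sub (by simp at hk; omega), ← hm, ZMod.natCast_self, zero_sub, inv_neg, neg_sq]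
  rw [sum_congr rfl hreflect, ← two_mul] at hfull
  have h2 : (2 : ZMod p) ≠ 0 := by
    exact_mod_cast (ZMod.natCast_eq_zero_iff 2 p).not.2
      (Nat.not_dvd_of_pos_of_lt two_pos (by omega))
  exact (mul_eq_zero.1 hfull).resolve_left h2

theorem natCast_sq_mul_eq_zero_of_castHom_eq_zero {x : ZMod (p ^ 3)}
    (hx : ZMod.castHom (dvd_pow_self p three_ne_zero) (ZMod p) x = 0) :
    (p : ZMod (p ^ 3)) ^ 2 * x = 0 := by
  obtain ⟨y, rfl⟩ := ZMod.exists_eq_natCast_mul_of_castHom_eq_zero _ hx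
  rw [← mul_assoc, ← pow_succ, ZMod.natCast_pow_eq_zero, zero_mul]

theorem natCast_sq_mul_sum_inv_sq_eq_zero {n : ℕ} (hn : n < p)
    (h : ∑ k ∈ Icc 1 n, ((k : ZMod p)⁻¹) ^ 2 = 0) :
    (p : ZMod (p ^ 3)) ^ 2 * ∑ k ∈ Icc 1 n, ((k : ZMod (p ^ 3))⁻¹) ^ 2 = 0 := by
  refine natCast_sq_mul_eq_zero_of_castHom_eq_zero ?_
  rw [map_sum, ← h]
  refine sum_congr rfl fun k hk ↦ ?_
  rw [map_pow, ZMod.castHom_natCast_inv _ (coprime_pow_of_not_dvd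
    (Nat.not_dvd_of_pos_of_lt (mem_Icc.1 hk).1 (by grind)))]

theorem natCast_pow_pred_sub_one_pow_three_eq_zero {a : ℕ} (ha : ¬p ∣ a) :
    ((a : ZMod (p ^ 3)) ^ (p - 1) - 1) ^ 3 = 0 := by
  have hfermat : ZMod.castHom (dvd_pow_self p three_ne_zero) (ZMod p)
      ((a : ZMod (p ^ 3)) ^ (p - 1) - 1) = 0 := by
    rw [map_sub, map_pow, map_natCast, map_one,
      ZMod.pow_card_sub_one_eq_one (by rwa [Ne, ZMod.natCast_eq_zero_iff]), sub_self]
  obtain ⟨y, hy⟩ := ZMod.exists_eq_natCast_mul_of_castHom_eq_zero _ hfermat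
  rw [hy, mul_pow, ZMod.natCast_pow_eq_zero, zero_mul]

theorem natCast_choose_mul_eq {a k : ℕ} (ha : 0 < a) (hk : k ∈ Icc 1 (p - 1)) :
    ((a * p).choose k : ZMod (p ^ 3))
      = (-1) ^ (k + 1) * (k : ZMod (p ^ 3))⁻¹
        * (a * p - (a * p) ^ 2 * harmonicMod p (k - 1)) := by
  have hp := (Fact.out : p.Prime).pos
  obtain ⟨i, rfl⟩ : ∃ i, k = i + 1 := ⟨k - 1, by grind⟩
  have hi : i + 1 < p := by grind
  obtain ⟨N, hN⟩ : ∃ N, a * p = N + 1 := ⟨a * p - 1, by have := Nat.mul_pos ha hp; omega⟩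
  have hx : ((N : ZMod (p ^ 3)) + 1) ^ 3 = 0 := by
    rw [← Nat.cast_add_one, ← hN, Nat.cast_mul, mul_pow, ZMod.natCast_pow_eq_zero, mul_zero]
  have hnat := congrArg (Nat.cast : ℕ → ZMod (p ^ 3)) (Nat.add_one_mul_choose_eq N i)
  have hprod := natCast_choose_eq_prod (p := p) (e := 3) (N := N) (k := i) (by omega)
  have hfirst := mul_prod_one_sub_mul_of_pow_three_eq_zero (Icc 1 i)
    (fun j ↦ (j : ZMod (p ^ 3))⁻¹) hx
  have hinv := natCast_mul_inv_of_not_dvd (e := 3) (Nat.not_dvd_of_pos_of_lt i.succ_pos hi)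
  rw [← Nat.cast_mul, hN, add_tsub_cancel_right, harmonicMod]
  push_cast at hnat hinv ⊢
  linear_combination -((N + 1).choose (i + 1) : ZMod (p ^ 3)) * hinv
    - ((i : ZMod (p ^ 3)) + 1)⁻¹ * hnat
    + ((i : ZMod (p ^ 3)) + 1)⁻¹ * ((N : ZMod (p ^ 3)) + 1) * hprod
    + (-1) ^ i * ((i : ZMod (p ^ 3)) + 1)⁻¹ * hfirst

theorem sum_Icc_natCast_choose_mul_eq {a : ℕ} (ha : 0 < a) :
    ∑ k ∈ Icc 1 (p - 1), ((a * p).choose k : ZMod (p ^ 3))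
      = a * p * altHarmonicMod p - (a * p) ^ 2 * altHarmonicMulHarmonicMod p := by
  rw [altHarmonicMod, altHarmonicMulHarmonicMod, mul_sum, mul_sum, ← sum_sub_distrib]
  refine sum_congr rfl fun k hk ↦ ?_
  rw [natCast_choose_mul_eq ha hk]
  ring

theorem two_pow_eq_altHarmonicMod :
    (2 : ZMod (p ^ 3)) ^ p
      = 2 + p * altHarmonicMod p - p ^ 2 * altHarmonicMulHarmonicMod p := by
  have hsum := congrArg (Nat.cast : ℕ → ZMod (p ^ 3)) (Nat.sum_range_choose p)
  rw [sum_range_succ, sum_range_eq_add_sum_Icc (Fact.out : p.Prime).pos] at hsum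
  have hmid := sum_Icc_natCast_choose_mul_eq (p := p) one_pos
  simp only [one_mul, Nat.cast_one] at hmid
  push_cast [Nat.choose_zero_right, Nat.choose_self] at hsum
  rw [hmid] at hsum
  linear_combination -hsum

theorem natCast_choose_two_mul_self_eq_two (hp : 3 < p) :
    ((2 * p).choose p : ZMod (p ^ 3)) = 2 := by
  have hsq : ∀ k ∈ Icc 1 (p - 1), ((p.choose k : ℕ) : ZMod (p ^ 3)) ^ 2
      = (p : ZMod (p ^ 3)) ^ 2 * ((k : ZMod (p ^ 3))⁻¹) ^ 2 := by
    intro k hk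
    have h := natCast_choose_mul_eq (p := p) one_pos hk
    simp only [one_mul, Nat.cast_one] at h
    have hc := ZMod.natCast_pow_eq_zero p 3
    have hsign : ((-1 : ZMod (p ^ 3)) ^ (k + 1)) ^ 2 = 1 := by
      rw [← pow_mul, pow_mul', neg_one_sq, one_pow]
    rw [h]
    linear_combination (((-1) ^ (k + 1)) ^ 2 * ((k : ZMod (p ^ 3))⁻¹) ^ 2
      * (p * (harmonicMod p (k - 1)) ^ 2 - 2 * harmonicMod p (k - 1))) * hc
      + (p : ZMod (p ^ 3)) ^ 2 * ((k : ZMod (p ^ 3))⁻¹) ^ 2 * hsign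
  rw [← Nat.sum_range_choose_sq, sum_range_succ,
    sum_range_eq_add_sum_Icc (Fact.out : p.Prime).pos]
  push_cast [Nat.choose_zero_right, Nat.choose_self]
  rw [sum_congr rfl hsq, ← mul_sum,
    natCast_sq_mul_sum_inv_sq_eq_zero (by omega) (sum_Icc_inv_sq_eq_zero hp)]
  norm_num

theorem four_pow_eq_altHarmonicMod (hp : 3 < p) :
    (4 : ZMod (p ^ 3)) ^ p
      = 4 + 4 * p * altHarmonicMod p - 8 * p ^ 2 * altHarmonicMulHarmonicMod p := by
  have h := congrArg (Nat.cast : ℕ → ZMod (p ^ 3)) (two_mul_sum_range_choose_add_choose p)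
  rw [sum_range_eq_add_sum_Icc (Fact.out : p.Prime).pos] at h
  have hmid := sum_Icc_natCast_choose_mul_eq (p := p) two_pos
  push_cast [Nat.choose_zero_right] at h hmid
  rw [hmid, natCast_choose_two_mul_self_eq_two hp] at h
  linear_combination -h

theorem natCast_mul_harmonicMod_pred_eq_zero (hp : 3 < p) {m : ℕ} (hm : p = 2 * m + 1) :
    (p : ZMod (p ^ 3)) * harmonicMod p (p - 1) = 0 := by
  have hpair : ∀ k ∈ Icc 1 m, (k : ZMod (p ^ 3))⁻¹ + ((p - k : ℕ) : ZMod (p ^ 3))⁻¹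
      = p * ((k : ZMod (p ^ 3))⁻¹ * ((p - k : ℕ) : ZMod (p ^ 3))⁻¹) := by
    intro k hk
    have hk := mem_Icc.1 hk
    have h1 := natCast_mul_inv_of_not_dvd (p := p) (e := 3)
      (Nat.not_dvd_of_pos_of_lt hk.1 (by omega))
    have h2 := natCast_mul_inv_of_not_dvd (p := p) (e := 3) (k := p - k)
      (Nat.not_dvd_of_pos_of_lt (by omega) (by omega))
    have hsum : (k : ZMod (p ^ 3)) + ((p - k : ℕ) : ZMod (p ^ 3)) = p := by
      rw [← Nat.cast_add, Nat.add_sub_cancel' (by omega)]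
    set u := (k : ZMod (p ^ 3))⁻¹
    set v := ((p - k : ℕ) : ZMod (p ^ 3))⁻¹
    linear_combination -u * h2 - v * h1 + u * v * hsum
  have hmodp : ∀ k ∈ Icc 1 m, ZMod.castHom (dvd_pow_self p three_ne_zero) (ZMod p)
      ((k : ZMod (p ^ 3))⁻¹ * ((p - k : ℕ) : ZMod (p ^ 3))⁻¹)
        = -((k : ZMod p)⁻¹) ^ 2 := by
    intro k hk
    have hk := mem_Icc.1 hk
    rw [map_mul, ZMod.castHom_natCast_inv _ (coprime_pow_of_not_dvd
        (Nat.not_dvd_of_pos_of_lt hk.1 (by omega))),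
      ZMod.castHom_natCast_inv _ (coprime_pow_of_not_dvd
        (Nat.not_dvd_of_pos_of_lt (by omega) (by omega))),
      Nat.cast_sub (by omega), ZMod.natCast_self, zero_sub, inv_neg]
    ring
  rw [harmonicMod, show p - 1 = 2 * m by omega, sum_Icc_two_mul_eq_add_sum_reflect, ← hm,
    ← sum_add_distrib, sum_congr rfl hpair, ← mul_sum, ← mul_assoc, ← sq]
  refine natCast_sq_mul_eq_zero_of_castHom_eq_zero ?_
  rw [map_sum, sum_congr rfl hmodp, sum_neg_distrib, sum_Icc_half_inv_sq_eq_zero hp hm, neg_zero]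

theorem sum_Icc_one_add_neg_one_pow_mul_inv {n : ℕ} (hn : 2 * n < p) :
    ∑ k ∈ Icc 1 (2 * n), (1 + (-1) ^ k) * (k : ZMod (p ^ 3))⁻¹ = harmonicMod p n := by
  induction n with
  | zero => simp [harmonicMod]
  | succ n ih =>
    have hv := natCast_mul_inv_of_not_dvd (p := p) (e := 3)
      (Nat.not_dvd_of_pos_of_lt n.succ_pos (by omega))
    have hw := natCast_mul_inv_of_not_dvd (p := p) (e := 3) (k := 2 * n + 1 + 1)
      (Nat.not_dvd_of_pos_of_lt (by omega) (by omega))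
    rw [show 2 * (n + 1) = 2 * n + 1 + 1 by ring, sum_Icc_succ_top (by omega),
      sum_Icc_succ_top (by omega), ih (by omega), harmonicMod, harmonicMod,
      sum_Icc_succ_top (by omega),
      Odd.neg_one_pow ⟨n, rfl⟩, Even.neg_one_pow ⟨n + 1, by ring⟩]
    push_cast at hv hw ⊢
    linear_combination
      ((n : ZMod (p ^ 3)) + 1)⁻¹ * hw - 2 * (2 * (n : ZMod (p ^ 3)) + 1 + 1)⁻¹ * hv

theorem altHarmonicMod_eq_sub {m : ℕ} (hm : p = 2 * m + 1) :
    altHarmonicMod p = harmonicMod p (p - 1) - harmonicMod p m := by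
  rw [altHarmonicMod, show p - 1 = 2 * m by omega, harmonicMod,
    ← sum_Icc_one_add_neg_one_pow_mul_inv (by omega), ← sum_sub_distrib]
  refine sum_congr rfl fun k _ ↦ ?_
  ring

theorem natCast_mul_harmonicMod_half_eq (hp : 3 < p) {m : ℕ} (hm : p = 2 * m + 1) :
    (p : ZMod (p ^ 3)) * harmonicMod p m
      = -2 * (2 ^ (p - 1) - 1) + (2 ^ (p - 1) - 1) ^ 2 := by
  have hpow : ∀ b : ZMod (p ^ 3), b ^ p = b * b ^ (p - 1) := fun b ↦ by
    rw [← pow_succ', show p - 1 + 1 = p by omega]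
  have h2 := two_pow_eq_altHarmonicMod (p := p)
  have h4 := four_pow_eq_altHarmonicMod hp
  rw [hpow] at h2 h4
  rw [four_pow_eq_sq_two_pow] at h4
  -- Comparing the expansions of `2^p` and `4^p` eliminates `altHarmonicMod`.
  have hT : 2 ^ 2 * ((p : ZMod (p ^ 3)) ^ 2 * altHarmonicMulHarmonicMod p)
      = 2 ^ 2 * -(2 ^ (p - 1) - 1) ^ 2 := by
    linear_combination h4 - 4 * h2
  have hT' := ((isUnit_two_of_two_lt (by omega)).pow 2).mul_left_cancel hT
  linear_combination h2 - hT' + (p : ZMod (p ^ 3)) * altHarmonicMod_eq_sub hm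
    + natCast_mul_harmonicMod_pred_eq_zero hp hm

theorem neg_one_pow_mul_choose_eq_four_pow (hp : 3 < p) {m : ℕ} (hm : p = 2 * m + 1) :
    (-1 : ZMod (p ^ 3)) ^ m * ((p - 1).choose m : ℕ) = 4 ^ (p - 1) := by
  have hN : ((p - 1 : ℕ) : ZMod (p ^ 3)) + 1 = p := by
    rw [← Nat.cast_add_one, Nat.sub_add_cancel (Fact.out : p.Prime).pos]
  have hprod := natCast_choose_eq_prod (p := p) (e := 3) (N := p - 1) (k := m) (by omega)
  rw [hN] at hprod
  have hexpand := two_mul_prod_one_sub_mul_of_pow_three_eq_zero (Icc 1 m)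
    (fun j ↦ (j : ZMod (p ^ 3))⁻¹) (ZMod.natCast_pow_eq_zero p 3)
  have hS := natCast_sq_mul_sum_inv_sq_eq_zero (p := p) (n := m) (by omega)
    (sum_Icc_half_inv_sq_eq_zero hp hm)
  have hH := natCast_mul_harmonicMod_half_eq hp hm
  rw [harmonicMod] at hH
  have hx := natCast_pow_pred_sub_one_pow_three_eq_zero (p := p) (a := 2)
    (Nat.not_dvd_of_pos_of_lt two_pos (by omega))
  push_cast at hx
  have hsign : ((-1 : ZMod (p ^ 3)) ^ m) ^ 2 = 1 := by
    rw [← pow_mul, pow_mul', neg_one_sq, one_pow]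
  set P := ∏ j ∈ Icc 1 m, (1 - p * (j : ZMod (p ^ 3))⁻¹)
  set H := ∑ k ∈ Icc 1 m, (k : ZMod (p ^ 3))⁻¹
  set x := (2 : ZMod (p ^ 3)) ^ (p - 1) - 1
  rw [four_pow_eq_sq_two_pow, show (2 : ZMod (p ^ 3)) ^ (p - 1) = 1 + x by ring]
  refine (isUnit_two_of_two_lt (by omega)).mul_left_cancel ?_
  -- `2 P = 2 - 2 p H + (p H)^2` and `p H = -2x + x^2` give `2 P = 2 (1 + x)^2` modulo `x^3`.
  linear_combination 2 * (-1 : ZMod (p ^ 3)) ^ m * hprod + 2 * P * hsign + hexpand - hS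
    + (p * H - 2 * x + x ^ 2 - 2) * hH + (x - 4) * hx

theorem pow_three_dvd_neg_one_pow_mul_choose_sub_four_pow (hp : 3 < p) {m : ℕ}
    (hm : p = 2 * m + 1) : (p : ℤ) ^ 3 ∣ (-1) ^ m * ((p - 1).choose m : ℕ) - 4 ^ (p - 1) := by
  rw [← Nat.cast_pow, ← ZMod.intCast_zmod_eq_zero_iff_dvd]
  push_cast
  rw [neg_one_pow_mul_choose_eq_four_pow hp hm, sub_self]

end PrimePower

theorem one_add_two_mul_fermatQuotient_two_add_sq {p : ℕ} (hp : p ≠ 0) :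
    1 + 2 * (p : ℚ) * fermatQuotient p 2 + (p : ℚ) ^ 2 * fermatQuotient p 2 ^ 2
      = 4 ^ (p - 1) := by
  have h : 1 + (p : ℚ) * fermatQuotient p 2 = 2 ^ (p - 1) := by
    rw [fermatQuotient]
    field_simp
    ring
  rw [four_pow_eq_sq_two_pow, ← h]
  ring

theorem stmt8_general (p : ℕ) [Fact p.Prime] (hp : 3 < p)
    (d : ℚ) (hdu : ‖(d : ℚ_[p])‖ = 1) :
    ‖((∑ k ∈ Finset.range ((p - 1) / 2 + 1),
        (1 + (4 - (d : ℚ_[p])) * (k : ℚ_[p]) ^ 2 + ((8 + (d : ℚ_[p])) / 2) * (k : ℚ_[p])) *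
          (((2 * k).choose k : ℕ) : ℚ_[p]) / (d : ℚ_[p]) ^ k) -
      ((-1 / d : ℚ) : ℚ_[p]) ^ ((p - 1) / 2) * (p : ℚ_[p]) ^ 2 *
        (1 + 2 * (p : ℚ_[p]) * (fermatQuotient p 2 : ℚ_[p])
          + (p : ℚ_[p]) ^ 2 * (fermatQuotient p 2 : ℚ_[p]) ^ 2)) / (p : ℚ_[p]) ^ 5‖ ≤ 1 := by
  obtain ⟨m, hm⟩ : Odd p := (Fact.out : p.Prime).odd_of_ne_two (by omega)
  have hd : (d : ℚ_[p]) ≠ 0 := by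
    rintro h
    simp [h] at hdu
  have hp0 : (p : ℚ_[p]) ≠ 0 := by exact_mod_cast (Fact.out : p.Prime).ne_zero
  have hq : (1 + 2 * (p : ℚ_[p]) * (fermatQuotient p 2 : ℚ_[p])
      + (p : ℚ_[p]) ^ 2 * (fermatQuotient p 2 : ℚ_[p]) ^ 2) = 4 ^ (p - 1) := by
    exact_mod_cast one_add_two_mul_fermatQuotient_two_add_sq (Fact.out : p.Prime).ne_zero
  obtain ⟨t, ht⟩ := pow_three_dvd_neg_one_pow_mul_choose_sub_four_pow hp hm
  have ht' : (-1 : ℚ_[p]) ^ m * ((p - 1).choose m : ℕ) - 4 ^ (p - 1) = p ^ 3 * t := by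
    exact_mod_cast ht
  have hsign : ((-1 : ℚ_[p]) ^ m) ^ 2 = 1 := by rw [← pow_mul, pow_mul', neg_one_sq, one_pow]
  rw [show (p - 1) / 2 = m by omega, sum_range_mul_choose_div_pow hd, hq,
    show 2 * m = p - 1 by omega, show 2 * (m : ℚ_[p]) + 1 = p by exact_mod_cast hm.symm]
  calc _ = ‖((-1 / d : ℚ) : ℚ_[p]) ^ m * t‖ := by
        congr 1
        push_cast
        rw [div_pow]
        field_simp
        linear_combination (-1 : ℚ_[p]) ^ m * ht' - ((p - 1).choose m : ℕ) * hsign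
    _ ≤ 1 := by
      rw [norm_mul, norm_pow, Rat.cast_div, norm_div, Rat.cast_neg, Rat.cast_one, norm_neg,
        norm_one, hdu, div_one, one_pow, one_mul]
      exact Padic.norm_int_le_one t

theorem stmt8 (p : ℕ) [Fact p.Prime] (hp : 3 < p)
    (d : ℚ) (hd0 : d ≠ 0) (hdu : ‖(d : ℚ_[p])‖ = 1) :
    ‖((∑ k ∈ Finset.range ((p - 1) / 2 + 1),
        (1 + (4 - (d : ℚ_[p])) * (k : ℚ_[p]) ^ 2 + ((8 + (d : ℚ_[p])) / 2) * (k : ℚ_[p])) *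
          (((2 * k).choose k : ℕ) : ℚ_[p]) / (d : ℚ_[p]) ^ k) -
      ((-1 / d : ℚ) : ℚ_[p]) ^ ((p - 1) / 2) * (p : ℚ_[p]) ^ 2 *
        (1 + 2 * (p : ℚ_[p]) * (fermatQuotient p 2 : ℚ_[p])
          + (p : ℚ_[p]) ^ 2 * (fermatQuotient p 2 : ℚ_[p]) ^ 2)) / (p : ℚ_[p]) ^ 5‖ ≤ 1 :=
  stmt8_general p hp d hdu
end

section
/- Let n be a positive integer, let d be a nonzero rational number, and let x be a p-adic integer (for an odd prime p). Then the following chain of identities holds in ℚ_p: ∑_{k=0}^{n−1} (x² + x − (1+4d)k² − (1−2d)k) · d^{−k} C(x,k)C(x+k,k)/C(2k,k) = −2nd + n·∑_{k=0}^{n−1} (x² + x + 2d − (1+4d)k² − (1+2d)k) · d^{−k} C(x,k)C(x+k,k)/((k+1)C(2k,k)) = (2n−1)·∑_{k=0}^{n−1} (x² + x − (1+4d)k² − (1+2d)k) · d^{−k} C(x,k)C(x+k,k)/((2k+1)C(2k,k)). -/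
section Telescoping

variable {K : Type*} {q y : K} {w : ℕ → K}

theorem sum_range_mul_eq_of_recurrence [CommRing K]
    (hw : ∀ k : ℕ, 2 * q * (k + 1) * (2 * k + 1) * w (k + 1) = (y - k) * (y + k + 1) * w k)
    (n : ℕ) :
    ∑ k ∈ Finset.range n, (y ^ 2 + y - (1 + 4 * q) * (k : K) ^ 2 - (1 - 2 * q) * k) * w k
      = 2 * q * n * (2 * n - 1) * w n := by
  induction n with
  | zero => simp
  | succ n ih =>
    rw [Finset.sum_range_succ, ih]
    push_cast
    linear_combination -(hw n)

variable [Field K] [CharZero K]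

theorem sum_range_mul_div_succ_eq_of_recurrence
    (hw : ∀ k : ℕ, 2 * q * (k + 1) * (2 * k + 1) * w (k + 1) = (y - k) * (y + k + 1) * w k)
    (hw0 : w 0 = 1) (n : ℕ) :
    ∑ k ∈ Finset.range n,
        (y ^ 2 + y + 2 * q - (1 + 4 * q) * (k : K) ^ 2 - (1 + 2 * q) * k) * (w k / (k + 1))
      = 2 * q * (2 * n - 1) * w n + 2 * q := by
  induction n with
  | zero => simp [hw0]
  | succ n ih =>
    rw [Finset.sum_range_succ, ih]
    have hn : (n + 1 : K) ≠ 0 := Nat.cast_add_one_ne_zero n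
    push_cast
    field_simp
    linear_combination -(hw n)

theorem sum_range_mul_div_two_mul_add_one_eq_of_recurrence
    (hw : ∀ k : ℕ, 2 * q * (k + 1) * (2 * k + 1) * w (k + 1) = (y - k) * (y + k + 1) * w k)
    (n : ℕ) :
    ∑ k ∈ Finset.range n,
        (y ^ 2 + y - (1 + 4 * q) * (k : K) ^ 2 - (1 + 2 * q) * k) * (w k / (2 * k + 1))
      = 2 * q * n * w n := by
  induction n with
  | zero => simp
  | succ n ih =>
    rw [Finset.sum_range_succ, ih]
    have hn : (2 * n + 1 : K) ≠ 0 := by exact_mod_cast (2 * n).succ_ne_zero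
    push_cast
    field_simp
    linear_combination -(hw n)

end Telescoping

section Weight

variable {p : ℕ} [Fact p.Prime]

theorem gbinom_zero (y : ℚ_[p]) : gbinom p y 0 = 1 := by
  simp [gbinom]

theorem gbinom_succ_mul (y : ℚ_[p]) (k : ℕ) :
    gbinom p y (k + 1) * (k + 1) = gbinom p y k * (y - k) := by
  have hk : (k.factorial : ℚ_[p]) ≠ 0 := Nat.cast_ne_zero.mpr k.factorial_ne_zero
  unfold gbinom
  rw [Finset.prod_range_succ, Nat.factorial_succ]
  push_cast
  field_simp

theorem gbinom_add_succ_mul (y : ℚ_[p]) (k : ℕ) :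
    gbinom p (y + (k + 1)) (k + 1) * (k + 1) = gbinom p (y + k) k * (y + k + 1) := by
  have hk : (k.factorial : ℚ_[p]) ≠ 0 := Nat.cast_ne_zero.mpr k.factorial_ne_zero
  have hprod : ∏ i ∈ Finset.range k, (y + (k + 1) - ((i + 1 : ℕ) : ℚ_[p]))
      = ∏ i ∈ Finset.range k, (y + k - (i : ℚ_[p])) :=
    Finset.prod_congr rfl fun i _ => by push_cast; ring
  unfold gbinom
  rw [Finset.prod_range_succ', Nat.factorial_succ, hprod]
  push_cast
  field_simp
  ring

noncomputable def binomWeight (q y : ℚ_[p]) (k : ℕ) : ℚ_[p] :=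
  q ^ (-(k : ℤ)) * gbinom p y k * gbinom p (y + k) k / ((2 * k).choose k : ℕ)

theorem binomWeight_zero (q y : ℚ_[p]) : binomWeight q y 0 = 1 := by
  simp [binomWeight, gbinom_zero]

theorem binomWeight_recurrence {q : ℚ_[p]} (hq : q ≠ 0) (y : ℚ_[p]) (k : ℕ) :
    2 * q * (k + 1) * (2 * k + 1) * binomWeight q y (k + 1)
      = (y - k) * (y + k + 1) * binomWeight q y k := by
  have hcentral : ((k : ℚ_[p]) + 1) * ((2 * (k + 1)).choose (k + 1) : ℕ)
      = 2 * (2 * k + 1) * ((2 * k).choose k : ℕ) := by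
    simpa [Nat.centralBinom_eq_two_mul_choose] using
      congrArg (Nat.cast : ℕ → ℚ_[p]) (Nat.succ_mul_centralBinom_succ k)
  have hzpow : q ^ (-((k + 1 : ℕ) : ℤ)) = q ^ (-(k : ℤ)) / q := by
    rw [Nat.cast_succ, neg_add, zpow_add₀ hq, zpow_neg_one, div_eq_mul_inv]
  have hk : (k + 1 : ℚ_[p]) ≠ 0 := Nat.cast_add_one_ne_zero k
  have hC : (((2 * k).choose k : ℕ) : ℚ_[p]) ≠ 0 :=
    Nat.cast_ne_zero.mpr (Nat.centralBinom_ne_zero k)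
  have hC' : (((2 * (k + 1)).choose (k + 1) : ℕ) : ℚ_[p]) ≠ 0 :=
    Nat.cast_ne_zero.mpr (Nat.centralBinom_ne_zero (k + 1))
  have hy := gbinom_succ_mul y k
  have hyk := gbinom_add_succ_mul y k
  unfold binomWeight
  rw [hzpow]
  push_cast
  field_simp
  refine mul_right_cancel₀ hk ?_
  linear_combination 2 * (2 * k + 1) * ((2 * k).choose k : ℕ) *
      (gbinom p (y + (k + 1)) (k + 1) * (k + 1) * hy + gbinom p y k * (y - k) * hyk)
    - gbinom p y k * gbinom p (y + k) k * (y - k) * (y + k + 1) * hcentral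

end Weight

theorem stmt12_general (p : ℕ) [Fact p.Prime]
    (n : ℕ) (d : ℚ) (hd0 : d ≠ 0) (x : ℤ_[p]) :
    (∑ k ∈ Finset.range n,
        ((x : ℚ_[p]) ^ 2 + (x : ℚ_[p]) - (1 + 4 * (d : ℚ_[p])) * (k : ℚ_[p]) ^ 2
            - (1 - 2 * (d : ℚ_[p])) * (k : ℚ_[p])) *
          ((d : ℚ_[p]) ^ (-(k : ℤ)) * gbinom p (x : ℚ_[p]) k * gbinom p ((x : ℚ_[p]) + (k : ℚ_[p])) k
            / (((2 * k).choose k : ℕ) : ℚ_[p]))) =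
      -2 * (n : ℚ_[p]) * (d : ℚ_[p]) + (n : ℚ_[p]) *
        ∑ k ∈ Finset.range n,
          ((x : ℚ_[p]) ^ 2 + (x : ℚ_[p]) + 2 * (d : ℚ_[p])
              - (1 + 4 * (d : ℚ_[p])) * (k : ℚ_[p]) ^ 2
              - (1 + 2 * (d : ℚ_[p])) * (k : ℚ_[p])) *
            ((d : ℚ_[p]) ^ (-(k : ℤ)) * gbinom p (x : ℚ_[p]) k *
                gbinom p ((x : ℚ_[p]) + (k : ℚ_[p])) k
              / (((k : ℚ_[p]) + 1) * (((2 * k).choose k : ℕ) : ℚ_[p]))) ∧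
    -2 * (n : ℚ_[p]) * (d : ℚ_[p]) + (n : ℚ_[p]) *
        (∑ k ∈ Finset.range n,
          ((x : ℚ_[p]) ^ 2 + (x : ℚ_[p]) + 2 * (d : ℚ_[p])
              - (1 + 4 * (d : ℚ_[p])) * (k : ℚ_[p]) ^ 2
              - (1 + 2 * (d : ℚ_[p])) * (k : ℚ_[p])) *
            ((d : ℚ_[p]) ^ (-(k : ℤ)) * gbinom p (x : ℚ_[p]) k *
                gbinom p ((x : ℚ_[p]) + (k : ℚ_[p])) k
              / (((k : ℚ_[p]) + 1) * (((2 * k).choose k : ℕ) : ℚ_[p])))) =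
      (2 * (n : ℚ_[p]) - 1) *
        ∑ k ∈ Finset.range n,
          ((x : ℚ_[p]) ^ 2 + (x : ℚ_[p]) - (1 + 4 * (d : ℚ_[p])) * (k : ℚ_[p]) ^ 2
              - (1 + 2 * (d : ℚ_[p])) * (k : ℚ_[p])) *
            ((d : ℚ_[p]) ^ (-(k : ℤ)) * gbinom p (x : ℚ_[p]) k *
                gbinom p ((x : ℚ_[p]) + (k : ℚ_[p])) k
              / ((2 * (k : ℚ_[p]) + 1) * (((2 * k).choose k : ℕ) : ℚ_[p]))) := by
  have hq : (d : ℚ_[p]) ≠ 0 := Rat.cast_ne_zero.mpr hd0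
  have hw := binomWeight_recurrence hq (x : ℚ_[p])
  have h1 := sum_range_mul_eq_of_recurrence hw n
  have h2 := sum_range_mul_div_succ_eq_of_recurrence hw (binomWeight_zero _ _) n
  have h3 := sum_range_mul_div_two_mul_add_one_eq_of_recurrence hw n
  unfold binomWeight at h1 h2 h3
  simp only [div_mul_eq_div_div_swap]
  rw [h1, h2, h3]
  constructor <;> ring

theorem stmt12 (p : ℕ) [Fact p.Prime] (hp : Odd p)
    (n : ℕ) (hn : 0 < n) (d : ℚ) (hd0 : d ≠ 0) (x : ℤ_[p]) :
    (∑ k ∈ Finset.range n,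
        ((x : ℚ_[p]) ^ 2 + (x : ℚ_[p]) - (1 + 4 * (d : ℚ_[p])) * (k : ℚ_[p]) ^ 2
            - (1 - 2 * (d : ℚ_[p])) * (k : ℚ_[p])) *
          ((d : ℚ_[p]) ^ (-(k : ℤ)) * gbinom p (x : ℚ_[p]) k * gbinom p ((x : ℚ_[p]) + (k : ℚ_[p])) k
            / (((2 * k).choose k : ℕ) : ℚ_[p]))) =
      -2 * (n : ℚ_[p]) * (d : ℚ_[p]) + (n : ℚ_[p]) *
        ∑ k ∈ Finset.range n,
          ((x : ℚ_[p]) ^ 2 + (x : ℚ_[p]) + 2 * (d : ℚ_[p])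
              - (1 + 4 * (d : ℚ_[p])) * (k : ℚ_[p]) ^ 2
              - (1 + 2 * (d : ℚ_[p])) * (k : ℚ_[p])) *
            ((d : ℚ_[p]) ^ (-(k : ℤ)) * gbinom p (x : ℚ_[p]) k *
                gbinom p ((x : ℚ_[p]) + (k : ℚ_[p])) k
              / (((k : ℚ_[p]) + 1) * (((2 * k).choose k : ℕ) : ℚ_[p]))) ∧
    -2 * (n : ℚ_[p]) * (d : ℚ_[p]) + (n : ℚ_[p]) *
        (∑ k ∈ Finset.range n,
          ((x : ℚ_[p]) ^ 2 + (x : ℚ_[p]) + 2 * (d : ℚ_[p])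
              - (1 + 4 * (d : ℚ_[p])) * (k : ℚ_[p]) ^ 2
              - (1 + 2 * (d : ℚ_[p])) * (k : ℚ_[p])) *
            ((d : ℚ_[p]) ^ (-(k : ℤ)) * gbinom p (x : ℚ_[p]) k *
                gbinom p ((x : ℚ_[p]) + (k : ℚ_[p])) k
              / (((k : ℚ_[p]) + 1) * (((2 * k).choose k : ℕ) : ℚ_[p])))) =
      (2 * (n : ℚ_[p]) - 1) *
        ∑ k ∈ Finset.range n,
          ((x : ℚ_[p]) ^ 2 + (x : ℚ_[p]) - (1 + 4 * (d : ℚ_[p])) * (k : ℚ_[p]) ^ 2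
              - (1 + 2 * (d : ℚ_[p])) * (k : ℚ_[p])) *
            ((d : ℚ_[p]) ^ (-(k : ℤ)) * gbinom p (x : ℚ_[p]) k *
                gbinom p ((x : ℚ_[p]) + (k : ℚ_[p])) k
              / ((2 * (k : ℚ_[p]) + 1) * (((2 * k).choose k : ℕ) : ℚ_[p]))) :=
  stmt12_general p n d hd0 x
end

section
/- Let d be a nonzero rational number, let x be a p-adic integer (for an odd prime p), and let n be a nonnegative integer. Then ∑_{k=0}^{n−1} (x² + x − (1+4d)k² − (1−2d)k) · d^{−k} C(x,k)C(x+k,k)/C(2k,k) = 2n(2n−1)·C(x,n)C(x+n,n)/(d^{n−1} C(2n,n)), as an identity in ℚ_p. -/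
lemma cast_succ_ne (p : ℕ) [Fact p.Prime] (k : ℕ) : ((k : ℚ_[p]) + 1) ≠ 0 := by
  have : (((k+1) : ℕ) : ℚ_[p]) ≠ 0 := Nat.cast_ne_zero.mpr (Nat.succ_ne_zero k)
  push_cast at this; exact this

lemma gbinom_succ (p : ℕ) [Fact p.Prime] (x : ℚ_[p]) (k : ℕ) :
    gbinom p x (k+1) = gbinom p x k * (x - (k : ℚ_[p])) / ((k : ℚ_[p]) + 1) := by
  unfold gbinom
  rw [Finset.prod_range_succ, Nat.factorial_succ]
  push_cast
  rw [div_mul_eq_mul_div, div_div]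
  ring

lemma gbinom_shift (p : ℕ) [Fact p.Prime] (x : ℚ_[p]) (k : ℕ) :
    gbinom p (x + ((k : ℚ_[p]) + 1)) (k+1)
      = gbinom p (x + (k : ℚ_[p])) k * (x + (k : ℚ_[p]) + 1) / ((k : ℚ_[p]) + 1) := by
  unfold gbinom
  rw [Finset.prod_range_succ', Nat.factorial_succ]
  have hprod : ∏ i ∈ Finset.range k, (x + ((k : ℚ_[p]) + 1) - ((i + 1 : ℕ) : ℚ_[p]))
      = ∏ i ∈ Finset.range k, (x + (k : ℚ_[p]) - (i : ℚ_[p])) := by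
    refine Finset.prod_congr rfl fun i _ => ?_
    push_cast; ring
  rw [hprod]
  push_cast
  rw [div_mul_eq_mul_div, div_div]
  ring

theorem stmt14 (p : ℕ) [Fact p.Prime] (hp : Odd p)
    (d : ℚ) (hd0 : d ≠ 0) (x : ℤ_[p]) (n : ℕ) :
    (∑ k ∈ Finset.range n,
        ((x : ℚ_[p]) ^ 2 + (x : ℚ_[p]) - (1 + 4 * (d : ℚ_[p])) * (k : ℚ_[p]) ^ 2
            - (1 - 2 * (d : ℚ_[p])) * (k : ℚ_[p])) *
          ((d : ℚ_[p]) ^ (-(k : ℤ)) * gbinom p (x : ℚ_[p]) k * gbinom p ((x : ℚ_[p]) + (k : ℚ_[p])) k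
            / (((2 * k).choose k : ℕ) : ℚ_[p]))) =
      2 * (n : ℚ_[p]) * (2 * (n : ℚ_[p]) - 1) * gbinom p (x : ℚ_[p]) n *
          gbinom p ((x : ℚ_[p]) + (n : ℚ_[p])) n
        / ((d : ℚ_[p]) ^ ((n : ℤ) - 1) * (((2 * n).choose n : ℕ) : ℚ_[p])) := by
  have hc : ((d : ℚ_[p])) ≠ 0 := Rat.cast_ne_zero.mpr hd0
  set c : ℚ_[p] := (d : ℚ_[p]) with hcdef
  induction n with
  | zero => simp
  | succ n ih =>
    rw [Finset.sum_range_succ, ih]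
    have hK : (((2 * n).choose n : ℕ) : ℚ_[p]) ≠ 0 :=
      Nat.cast_ne_zero.mpr (Nat.choose_pos (by omega)).ne'
    have hn1 : ((n : ℚ_[p]) + 1) ≠ 0 := cast_succ_ne p n
    -- central binomial recurrence
    have hcb : (((2 * (n+1)).choose (n+1) : ℕ) : ℚ_[p])
        = 2 * (2 * (n : ℚ_[p]) + 1) * (((2 * n).choose n : ℕ) : ℚ_[p]) / ((n : ℚ_[p]) + 1) := by
      rw [eq_div_iff hn1]
      have h2 : ((n + 1) * Nat.centralBinom (n + 1) : ℕ) = (2 * (2 * n + 1) * Nat.centralBinom n : ℕ) :=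
        Nat.succ_mul_centralBinom_succ n
      have := congrArg (fun m : ℕ => (m : ℚ_[p])) h2
      simp only [Nat.centralBinom] at this
      push_cast at this ⊢
      linear_combination this
    have hg1 := gbinom_succ p (x : ℚ_[p]) n
    have hg2 := gbinom_shift p (x : ℚ_[p]) n
    have hpow1 : c ^ (-((n : ℕ) : ℤ)) = (c ^ n)⁻¹ := by
      rw [zpow_neg, zpow_natCast]
    have hpow2 : c ^ (((n : ℕ) : ℤ) - 1) = c ^ n / c := by
      rw [zpow_sub₀ hc, zpow_natCast, zpow_one]
    have hcn : c ^ n ≠ 0 := pow_ne_zero _ hc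
    push_cast [hg1, hg2, hpow1, hpow2, hcb]
    rw [show ((n:ℤ)+1-1) = (n:ℤ) from by ring, zpow_natCast]
    generalize gbinom p (x : ℚ_[p]) n = A
    generalize gbinom p ((x : ℚ_[p]) + (n : ℚ_[p])) n = B
    generalize hKg : (((2 * n).choose n : ℕ) : ℚ_[p]) = K at hK ⊢
    generalize (x : ℚ_[p]) = y
    have h2n1 : (2 * (n : ℚ_[p]) + 1) ≠ 0 := by
      have : (((2*n+1) : ℕ) : ℚ_[p]) ≠ 0 := Nat.cast_ne_zero.mpr (by omega)
      push_cast at this; exact this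
    rw [eq_div_iff (mul_ne_zero hcn (div_ne_zero
      (mul_ne_zero (mul_ne_zero two_ne_zero h2n1) hK) hn1))]
    field_simp
    ring
end

section
/- Let d be a nonzero rational number, let x be a p-adic integer (for an odd prime p), and let n be a nonnegative integer. Then ∑_{k=0}^{n−1} (x² + x + 2d − (1+4d)k² − (1+2d)k) · d^{−k} C(x,k)C(x+k,k)/((k+1)C(2k,k)) = 2d + 2(2n−1)·C(x,n)C(x+n,n)/(d^{n−1} C(2n,n)), as an identity in ℚ_p. -/
/-!
With `u k = C(x,k) C(x+k,k) / (d^k C(2k,k))`, the three recurrences for `C(x,k)`, `C(x+k,k)` and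
`C(2k,k)` give `2d(k+1)(2k+1) u (k+1) = (x-k)(x+k+1) u k`. Under this recurrence the `k`-th summand
is exactly `2d((2k+1) u (k+1) - (2k-1) u k)`, so the sum telescopes to `2d(2n-1) u n + 2d u 0`.
-/

theorem sum_range_eq_of_succ_mul_eq {F : Type*} [Field F] [CharZero F] (d x : F) (u : ℕ → F)
    (hu : ∀ k : ℕ, 2 * d * (k + 1) * (2 * k + 1) * u (k + 1) = (x - k) * (x + k + 1) * u k)
    (n : ℕ) :
    ∑ k ∈ Finset.range n,
        (x ^ 2 + x + 2 * d - (1 + 4 * d) * (k : F) ^ 2 - (1 + 2 * d) * k) * u k / (k + 1) =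
      2 * d * (2 * n - 1) * u n + 2 * d * u 0 := by
  induction n with
  | zero => simp
  | succ n ih =>
    have hn : (n : F) + 1 ≠ 0 := by exact_mod_cast n.succ_ne_zero
    rw [Finset.sum_range_succ, ih]
    field_simp
    push_cast
    linear_combination (-1 : F) * hu n

namespace gbinom

variable {p : ℕ} [Fact p.Prime]

theorem zero (x : ℚ_[p]) : gbinom p x 0 = 1 := by
  simp [gbinom]

theorem succ (x : ℚ_[p]) (n : ℕ) : gbinom p x (n + 1) = gbinom p x n * (x - n) / (n + 1) := by
  have hn : (n : ℚ_[p]) + 1 ≠ 0 := by exact_mod_cast n.succ_ne_zero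
  simp only [gbinom, Finset.prod_range_succ, Nat.factorial_succ]
  push_cast
  field_simp

theorem add_one_succ (y : ℚ_[p]) (n : ℕ) :
    gbinom p (y + 1) (n + 1) = gbinom p y n * (y + 1) / (n + 1) := by
  have hn : (n : ℚ_[p]) + 1 ≠ 0 := by exact_mod_cast n.succ_ne_zero
  simp only [gbinom, Finset.prod_range_succ', Nat.factorial_succ]
  push_cast
  simp only [add_sub_add_right_eq_sub, sub_zero]
  field_simp

end gbinom

noncomputable def centralTerm (p : ℕ) [Fact p.Prime] (d x : ℚ_[p]) (k : ℕ) : ℚ_[p] :=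
  d ^ (-(k : ℤ)) * gbinom p x k * gbinom p (x + k) k / ((2 * k).choose k : ℕ)

theorem centralTerm_zero {p : ℕ} [Fact p.Prime] (d x : ℚ_[p]) : centralTerm p d x 0 = 1 := by
  simp [centralTerm, gbinom.zero]

theorem centralTerm_succ {p : ℕ} [Fact p.Prime] {d : ℚ_[p]} (hd : d ≠ 0) (x : ℚ_[p]) (k : ℕ) :
    2 * d * (k + 1) * (2 * k + 1) * centralTerm p d x (k + 1) =
      (x - k) * (x + k + 1) * centralTerm p d x k := by
  have hk : (k : ℚ_[p]) + 1 ≠ 0 := by exact_mod_cast k.succ_ne_zero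
  have h2k : 2 * (k : ℚ_[p]) + 1 ≠ 0 := by exact_mod_cast (2 * k).succ_ne_zero
  have hcentral : (((2 * (k + 1)).choose (k + 1) : ℕ) : ℚ_[p]) =
      2 * (2 * k + 1) * ((2 * k).choose k : ℕ) / (k + 1) := by
    refine eq_div_of_mul_eq hk ?_
    rw [mul_comm]
    exact_mod_cast Nat.succ_mul_centralBinom_succ k
  have hshift : x + ((k + 1 : ℕ) : ℚ_[p]) = (x + k) + 1 := by push_cast; ring
  rw [centralTerm, centralTerm, hshift, gbinom.add_one_succ, gbinom.succ, hcentral, Nat.cast_succ,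
    neg_add, zpow_add₀ hd, zpow_neg_one]
  field_simp

theorem stmt16_general (p : ℕ) [Fact p.Prime]
    (d : ℚ) (hd0 : d ≠ 0) (x : ℤ_[p]) (n : ℕ) :
    (∑ k ∈ Finset.range n,
        ((x : ℚ_[p]) ^ 2 + (x : ℚ_[p]) + 2 * (d : ℚ_[p])
            - (1 + 4 * (d : ℚ_[p])) * (k : ℚ_[p]) ^ 2
            - (1 + 2 * (d : ℚ_[p])) * (k : ℚ_[p])) *
          ((d : ℚ_[p]) ^ (-(k : ℤ)) * gbinom p (x : ℚ_[p]) k * gbinom p ((x : ℚ_[p]) + (k : ℚ_[p])) k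
            / (((k : ℚ_[p]) + 1) * (((2 * k).choose k : ℕ) : ℚ_[p])))) =
      2 * (d : ℚ_[p]) +
        2 * (2 * (n : ℚ_[p]) - 1) * gbinom p (x : ℚ_[p]) n * gbinom p ((x : ℚ_[p]) + (n : ℚ_[p])) n
          / ((d : ℚ_[p]) ^ ((n : ℤ) - 1) * (((2 * n).choose n : ℕ) : ℚ_[p])) := by
  have hd : (d : ℚ_[p]) ≠ 0 := by exact_mod_cast hd0
  have h := sum_range_eq_of_succ_mul_eq (d : ℚ_[p]) (x : ℚ_[p]) (centralTerm p d x)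
    (centralTerm_succ hd x) n
  rw [centralTerm_zero] at h
  simp only [centralTerm] at h
  convert h using 1
  · refine Finset.sum_congr rfl fun k _ => ?_
    rw [mul_div_assoc _ _ ((k : ℚ_[p]) + 1), div_div, mul_comm (((2 * k).choose k : ℕ) : ℚ_[p])]
  · rw [zpow_sub₀ hd, zpow_one, zpow_neg]
    field_simp
    ring

theorem stmt16 (p : ℕ) [Fact p.Prime] (hp : Odd p)
    (d : ℚ) (hd0 : d ≠ 0) (x : ℤ_[p]) (n : ℕ) :
    (∑ k ∈ Finset.range n,
        ((x : ℚ_[p]) ^ 2 + (x : ℚ_[p]) + 2 * (d : ℚ_[p])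
            - (1 + 4 * (d : ℚ_[p])) * (k : ℚ_[p]) ^ 2
            - (1 + 2 * (d : ℚ_[p])) * (k : ℚ_[p])) *
          ((d : ℚ_[p]) ^ (-(k : ℤ)) * gbinom p (x : ℚ_[p]) k * gbinom p ((x : ℚ_[p]) + (k : ℚ_[p])) k
            / (((k : ℚ_[p]) + 1) * (((2 * k).choose k : ℕ) : ℚ_[p])))) =
      2 * (d : ℚ_[p]) +
        2 * (2 * (n : ℚ_[p]) - 1) * gbinom p (x : ℚ_[p]) n * gbinom p ((x : ℚ_[p]) + (n : ℚ_[p])) n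
          / ((d : ℚ_[p]) ^ ((n : ℤ) - 1) * (((2 * n).choose n : ℕ) : ℚ_[p])) :=
  stmt16_general p d hd0 x n
end

section
/- Let p ≥ 3 be a prime, let a be an integer with (p−1)/2 < a ≤ p−1, and let m be a p-adic integer. Then, with generalized binomial coefficients taken in ℚ_p, C(mp + a, (p+1)/2) · C(mp + (p+1)/2 + a, (p+1)/2) ≡ (−1)^{(p−1)/2}·4p·(1+m)·C(a + (p+1)/2, p+1) (mod p²), where C(a + (p+1)/2, p+1) is an ordinary binomial coefficient and the congruence means the difference divided by p² is a p-adic integer. -/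
open Finset IsUltrametricDist

theorem norm_mul_sub_mul_le_max {R : Type*} [SeminormedRing R] [IsUltrametricDist R]
    (a b c d : R) : ‖a * b - c * d‖ ≤ max (‖a - c‖ * ‖b‖) (‖c‖ * ‖b - d‖) :=
  calc ‖a * b - c * d‖ = ‖(a - c) * b + c * (b - d)‖ := by noncomm_ring
    _ ≤ max ‖(a - c) * b‖ ‖c * (b - d)‖ := norm_add_le_max _ _
    _ ≤ _ := max_le_max (norm_mul_le _ _) (norm_mul_le _ _)

theorem norm_mul_sub_mul_le_mul {R : Type*} [SeminormedRing R] [IsUltrametricDist R]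
    {a b c d : R} {r s : ℝ} (hr : 0 ≤ r) (hs : s ≤ 1) (hac : ‖a - c‖ ≤ r * s) (hc : ‖c‖ ≤ r)
    (hbd : ‖b - d‖ ≤ s) (hd : ‖d‖ ≤ 1) : ‖a * b - c * d‖ ≤ r * s := by
  have hb : ‖b‖ ≤ 1 := by
    simpa using (norm_add_le_max (b - d) d).trans (max_le (hbd.trans hs) hd)
  refine (norm_mul_sub_mul_le_max a b c d).trans (max_le ?_ ?_)
  · simpa using mul_le_mul hac hb (norm_nonneg _) ((norm_nonneg _).trans hac)
  · exact mul_le_mul hc hbd (norm_nonneg _) hr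

theorem norm_prod_sub_prod_le {R ι : Type*} [NormedCommRing R] [NormOneClass R]
    [IsUltrametricDist R] (s : Finset ι) {f g : ι → R} {r : ℝ}
    (hr : 0 ≤ r) (hf : ∀ i ∈ s, ‖f i‖ ≤ 1) (hg : ∀ i ∈ s, ‖g i‖ ≤ 1)
    (hfg : ∀ i ∈ s, ‖f i - g i‖ ≤ r) : ‖∏ i ∈ s, f i - ∏ i ∈ s, g i‖ ≤ r := by
  classical
  induction s using Finset.induction_on with
  | empty => simpa using hr
  | insert a s ha ih =>
    simp only [mem_insert, forall_eq_or_imp] at hf hg hfg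
    have hprod : ‖∏ i ∈ s, f i‖ ≤ 1 :=
      (norm_prod_le s f).trans (prod_le_one (fun _ _ ↦ norm_nonneg _) hf.2)
    rw [prod_insert ha, prod_insert ha]
    refine (norm_mul_sub_mul_le_max _ _ _ _).trans (max_le ?_ ?_)
    · simpa using mul_le_mul hfg.1 hprod (norm_nonneg _) hr
    · simpa using mul_le_mul hg.1 (ih hf.2 hg.2 hfg.2) (norm_nonneg _) zero_le_one

section

variable {p : ℕ} [Fact p.Prime]

theorem cast_choose_sub_one_eq_neg_one_pow {k : ℕ} (hk : k < p) :
    (((p - 1).choose k : ℕ) : ZMod p) = (-1) ^ k := by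
  induction k with
  | zero => simp
  | succ k ih =>
    have hk0 : ((k + 1 : ℕ) : ZMod p) ≠ 0 := by
      rw [Ne, ZMod.natCast_eq_zero_iff]
      exact Nat.not_dvd_of_pos_of_lt k.succ_pos hk
    have h := congrArg (Nat.cast : ℕ → ZMod p) (Nat.choose_succ_right_eq (p - 1) k)
    rw [Nat.cast_mul, Nat.cast_mul, ih (by omega), Nat.cast_sub (by omega),
      Nat.cast_sub (Fact.out : p.Prime).one_le, ZMod.natCast_self] at h
    refine mul_right_cancel₀ hk0 (h.trans ?_)
    push_cast
    ring

theorem centralBinom_modEq {q : ℕ} (hpq : p + 1 = 2 * q) :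
    (q.centralBinom : ℤ) ≡ (-1) ^ (q - 1) * 4 * p [ZMOD p ^ 2] := by
  obtain ⟨n, rfl⟩ : ∃ n, q = n + 1 := ⟨q - 1, by omega⟩
  have hp : (p : ℤ) = 2 * n + 1 := by omega
  have hb : (p : ℤ) ∣ n.centralBinom - (-1) ^ n := by
    rw [← ZMod.intCast_zmod_eq_zero_iff_dvd, Int.cast_sub, Int.cast_natCast,
      Nat.centralBinom_eq_two_mul_choose, show 2 * n = p - 1 by omega,
      cast_choose_sub_one_eq_neg_one_pow (by omega)]
    simp
  have hrec : ((n + 1 : ℕ) : ℤ) * (n + 1).centralBinom = 2 * p * n.centralBinom := by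
    rw [hp]; exact_mod_cast Nat.succ_mul_centralBinom_succ n
  have hB : ((n + 1).centralBinom : ℤ) = p * (4 * n.centralBinom - (n + 1).centralBinom) := by
    push_cast at hrec
    linear_combination 2 * hrec + ((n + 1).centralBinom : ℤ) * hp
  have hdiff : (-1) ^ n * 4 * p - ((n + 1).centralBinom : ℤ)
      = p * ((n + 1).centralBinom - 4 * (n.centralBinom - (-1) ^ n)) := by
    linear_combination -hB
  rw [Nat.add_sub_cancel, Int.modEq_iff_dvd, sq, hdiff]
  exact mul_dvd_mul_left _ ((Dvd.intro _ hB.symm).sub (dvd_mul_of_dvd_right hb 4))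

theorem gbinom_eq_choose (x : ℚ_[p]) (k : ℕ) : gbinom p x k = Ring.choose x k := by
  rw [Ring.choose_eq_smul, gbinom, ← Polynomial.aeval_eq_smeval, Polynomial.aeval_def,
    ← Polynomial.eval_map, descPochhammer_map, descPochhammer_eval_eq_prod_range,
    smul_eq_mul, div_eq_inv_mul]

theorem gbinom_natCast_s19 (n k : ℕ) : gbinom p n k = n.choose k := by
  rw [gbinom_eq_choose, Ring.choose_natCast]

theorem gbinom_mul_gbinom_add (x : ℚ_[p]) (k : ℕ) :
    gbinom p x k * gbinom p (x + k) k = k.centralBinom * gbinom p (x + k) (2 * k) := by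
  rw [gbinom_eq_choose, gbinom_eq_choose, gbinom_eq_choose, mul_comm, two_mul,
    Nat.centralBinom_eq_two_mul_choose, two_mul, ← nsmul_eq_mul, Ring.choose_add_smul_choose]

theorem Padic.norm_intCast_sub_le_of_modEq {a b : ℤ} {n : ℕ} (h : a ≡ b [ZMOD p ^ n]) :
    ‖(a : ℚ_[p]) - b‖ ≤ ‖(p : ℚ_[p])‖ ^ n := by
  have := (Padic.norm_int_le_pow_iff_dvd (a - b) n).mpr (by exact_mod_cast h.symm.dvd)
  rwa [Int.cast_sub, zpow_neg, zpow_natCast, ← inv_pow, ← Padic.norm_p] at this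

theorem Padic.norm_factorial_add_one : ‖((p + 1).factorial : ℚ_[p])‖ = ‖(p : ℚ_[p])‖ := by
  have hp : p.Prime := Fact.out
  rw [Nat.factorial_succ, ← Nat.mul_factorial_pred hp.ne_zero, Nat.cast_mul, Nat.cast_mul,
    norm_mul, norm_mul,
    norm_natCast_eq_one_iff.mpr (Nat.coprime_self_add_right.mpr (Nat.coprime_one_right p)),
    norm_natCast_eq_one_iff.mpr (hp.coprime_factorial_of_lt (Nat.sub_lt hp.pos one_pos)),
    one_mul, mul_one]

theorem norm_gbinom_natCast_mul_add_sub_le {u : ℚ_[p]} (hu : ‖u‖ ≤ 1) {j : ℕ} (hj : j ≤ p) :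
    ‖gbinom p (p * u + j) (p + 1) - u * gbinom p (p + j) (p + 1)‖ ≤ ‖(p : ℚ_[p])‖ := by
  have hjmem : j ∈ range (p + 1) := mem_range.mpr (Nat.lt_succ_of_le hj)
  set A := ∏ i ∈ (range (p + 1)).erase j, ((p : ℚ_[p]) * u + j - i)
  set B := ∏ i ∈ (range (p + 1)).erase j, ((p : ℚ_[p]) + j - i)
  have hnum : ∏ i ∈ range (p + 1), ((p : ℚ_[p]) * u + j - i)
      - u * ∏ i ∈ range (p + 1), ((p : ℚ_[p]) + j - i) = p * u * (A - B) := by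
    rw [← mul_prod_erase _ _ hjmem, ← mul_prod_erase _ _ hjmem]
    ring
  have hfactor (v : ℚ_[p]) (hv : ‖v‖ ≤ 1) (i : ℕ) : ‖(p : ℚ_[p]) * v + j - i‖ ≤ 1 := by
    rw [add_sub_assoc, show (j : ℚ_[p]) - i = ((j - i : ℤ) : ℚ_[p]) by push_cast; rfl]
    refine (norm_add_le_max _ _).trans (max_le ?_ (norm_intCast_le_one _ _))
    rw [norm_mul]
    exact mul_le_one₀ (norm_natCast_le_one _ p) (norm_nonneg _) hv
  have hAB : ‖A - B‖ ≤ ‖(p : ℚ_[p])‖ := by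
    refine norm_prod_sub_prod_le _ (norm_nonneg _) (fun i _ ↦ hfactor u hu i)
      (fun i _ ↦ by simpa using hfactor 1 (by simp) i) (fun i _ ↦ ?_)
    have hu1 : ‖u - 1‖ ≤ 1 := by
      simpa [sub_eq_add_neg] using (norm_add_le_max u (-1)).trans (max_le hu (by simp))
    calc ‖(p : ℚ_[p]) * u + j - i - (p + j - i)‖ = ‖(p : ℚ_[p])‖ * ‖u - 1‖ := by
          rw [← norm_mul]; ring_nf
      _ ≤ ‖(p : ℚ_[p])‖ := mul_le_of_le_one_right (norm_nonneg _) hu1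
  rw [gbinom, gbinom, mul_div_assoc', div_sub_div_same, hnum, norm_div,
    Padic.norm_factorial_add_one, norm_mul, norm_mul, mul_assoc,
    mul_div_cancel_left₀ _ (norm_ne_zero_iff.mpr (by simpa using (Fact.out : p.Prime).ne_zero))]
  simpa using mul_le_mul hu hAB (norm_nonneg _) zero_le_one

end

theorem stmt19 (p : ℕ) [Fact p.Prime] (hp : 3 ≤ p)
    (a : ℕ) (ha : (p - 1) / 2 < a) (ha' : a ≤ p - 1) (m : ℤ_[p]) :
    ‖(gbinom p ((m : ℚ_[p]) * (p : ℚ_[p]) + (a : ℚ_[p])) ((p + 1) / 2) *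
        gbinom p ((m : ℚ_[p]) * (p : ℚ_[p]) + (((p + 1) / 2 : ℕ) : ℚ_[p]) + (a : ℚ_[p]))
          ((p + 1) / 2) -
      (-1 : ℚ_[p]) ^ ((p - 1) / 2) * 4 * (p : ℚ_[p]) * (1 + (m : ℚ_[p])) *
        (((a + (p + 1) / 2).choose (p + 1) : ℕ) : ℚ_[p])) / (p : ℚ_[p]) ^ 2‖ ≤ 1 := by
  have hp0 : p ≠ 0 := (Fact.out : p.Prime).ne_zero
  have hodd : p % 2 = 1 := Nat.odd_iff.mp ((Fact.out : p.Prime).odd_of_ne_two (by omega))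
  set q := (p + 1) / 2
  have hpq : p + 1 = 2 * q := by omega
  obtain ⟨j, hj, hN⟩ : ∃ j ≤ p, a + q = p + j := ⟨a + q - p, by omega, by omega⟩
  have hu : ‖1 + (m : ℚ_[p])‖ ≤ 1 := by exact_mod_cast PadicInt.norm_le_one (1 + m)
  have hx : (m : ℚ_[p]) * p + a + q = p * (1 + m) + j := by
    linear_combination (by exact_mod_cast hN : (a : ℚ_[p]) + q = p + j)
  rw [add_right_comm _ (q : ℚ_[p]), gbinom_mul_gbinom_add, ← hpq, hx, hN,
    show (p - 1) / 2 = q - 1 by omega, mul_assoc _ (1 + (m : ℚ_[p])), norm_div, norm_pow,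
    div_le_one (pow_pos (norm_pos_iff.mpr (Nat.cast_ne_zero.mpr hp0)) 2), sq]
  have hE : ‖(-1 : ℚ_[p]) ^ (q - 1) * 4 * p‖ ≤ ‖(p : ℚ_[p])‖ := by
    rw [norm_mul]
    exact mul_le_of_le_one_left (norm_nonneg _)
      (by exact_mod_cast norm_intCast_le_one ℚ_[p] ((-1) ^ (q - 1) * 4))
  refine norm_mul_sub_mul_le_mul (norm_nonneg _) (norm_natCast_le_one _ p) ?_ hE
    (by simpa only [← Nat.cast_add, gbinom_natCast_s19] using norm_gbinom_natCast_mul_add_sub_le hu hj)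
    (by simpa only [norm_mul] using mul_le_one₀ hu (norm_nonneg _) (norm_natCast_le_one _ _))
  simpa [sq] using Padic.norm_intCast_sub_le_of_modEq (p := p) (centralBinom_modEq hpq)
end
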